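/- arXiv:1502.04442 — 11 statements merged into one kernel-verified Lean document; each statement's English description precedes it below -/
import Mathlib

section
/- For every embedding e : S → T of ordered trees, there exists a rigid surjection f : T → S whose injection is e. Explicitly, f(w) may be defined as the ⊑_S-largest v ∈ S with e(v) ⊑_T w. -/
/-- An ordered tree: a finite poset (`tle`, the tree order `⊑`) with a root,
linearly ordered predecessor sets, binary meets, together with a linear order
`lin` (the lexicographic order `≤`) extending the tree order and coherent with
the tree structure (determined on subtrees above incomparable vertices). -/
structure OTree (α : Type) [Finite α] where
  tle : α → α → Prop
  tle_refl : ∀ v, tle v v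
  tle_trans : ∀ u v w, tle u v → tle v w → tle u w
  tle_antisymm : ∀ v w, tle v w → tle w v → v = w
  root : α
  root_le : ∀ v, tle root v
  pred_chain : ∀ v x y, tle x v → tle y v → tle x y ∨ tle y x
  meet : α → α → α
  meet_le_left : ∀ v w, tle (meet v w) v
  meet_le_right : ∀ v w, tle (meet v w) w
  le_meet : ∀ x v w, tle x v → tle x w → tle x (meet v w)
  lin : α → α → Prop
  lin_refl : ∀ v, lin v v
  lin_trans : ∀ u v w, lin u v → lin v w → lin u w
  lin_antisymm : ∀ v w, lin v w → lin w v → v = w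
  lin_total : ∀ v w, lin v w ∨ lin w v
  tle_lin : ∀ v w, tle v w → lin v w
  lex_coh : ∀ v w v' w', tle v v' → tle w w' → ¬ tle v w → ¬ tle w v → (lin v' w' ↔ lin v w)

variable {α β γ : Type} [Finite α] [Finite β] [Finite γ]

/-- A morphism of ordered trees: preserves meets, the lexicographic order, and the root. -/
def IsMorphism (S : OTree α) (T : OTree β) (e : α → β) : Prop :=
  (∀ v w, e (S.meet v w) = T.meet (e v) (e w)) ∧
  (∀ v w, S.lin v w → T.lin (e v) (e w)) ∧
  e S.root = T.root

/-- An embedding is an injective morphism. -/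
def IsEmbedding (S : OTree α) (T : OTree β) (e : α → β) : Prop :=
  IsMorphism S T e ∧ Function.Injective e

/-- `e` witnesses that `f : T → S` is a rigid surjection: `e` is a morphism with
`f ∘ e = id_S` and `e ∘ f ⊑_T id_T` pointwise.  Such `e` is called the injection of `f`. -/
def IsInjectionOf (T : OTree β) (S : OTree α) (f : β → α) (e : α → β) : Prop :=
  IsMorphism S T e ∧ (∀ v, f (e v) = v) ∧ (∀ w, T.tle (e (f w)) w)

/-- `f : T → S` is a rigid surjection. -/
def IsRigidSurj (T : OTree β) (S : OTree α) (f : β → α) : Prop :=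
  ∃ e, IsInjectionOf T S f e

/-- `e` maps the `≤_S`-largest vertex (= largest leaf) of `S` to the `≤_T`-largest
vertex of `T`. -/
def IsSealedInj (T : OTree β) (S : OTree α) (e : α → β) : Prop :=
  ∀ s t, (∀ v, S.lin v s) → (∀ w, T.lin w t) → e s = t

/-- A sealed rigid surjection. -/
def IsSealedRS (T : OTree β) (S : OTree α) (f : β → α) : Prop :=
  ∃ e, IsInjectionOf T S f e ∧ IsSealedInj T S e

/-- The initial subtree `T^v = {w : w ≤_T v}`. -/
def OTree.initSeg (T : OTree β) (v : β) : Set β := {w | T.lin w v}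

/-- Restriction of an ordered tree to a nonempty `⊑`-downward closed subset. -/
def OTree.restrict (T : OTree β) (T' : Set β) (hne : T'.Nonempty)
    (hdc : ∀ v w, T.tle v w → w ∈ T' → v ∈ T') : OTree T' where
  tle v w := T.tle v.1 w.1
  tle_refl v := T.tle_refl v.1
  tle_trans u v w h1 h2 := T.tle_trans u.1 v.1 w.1 h1 h2
  tle_antisymm v w h1 h2 := Subtype.ext (T.tle_antisymm v.1 w.1 h1 h2)
  root := ⟨T.root, hdc T.root hne.some (T.root_le hne.some) hne.some_mem⟩
  root_le v := T.root_le v.1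
  pred_chain v x y h1 h2 := T.pred_chain v.1 x.1 y.1 h1 h2
  meet v w := ⟨T.meet v.1 w.1, hdc (T.meet v.1 w.1) v.1 (T.meet_le_left v.1 w.1) v.2⟩
  meet_le_left v w := T.meet_le_left v.1 w.1
  meet_le_right v w := T.meet_le_right v.1 w.1
  le_meet x v w h1 h2 := T.le_meet x.1 v.1 w.1 h1 h2
  lin v w := T.lin v.1 w.1
  lin_refl v := T.lin_refl v.1
  lin_trans u v w h1 h2 := T.lin_trans u.1 v.1 w.1 h1 h2
  lin_antisymm v w h1 h2 := Subtype.ext (T.lin_antisymm v.1 w.1 h1 h2)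
  lin_total v w := T.lin_total v.1 w.1
  tle_lin v w h := T.tle_lin v.1 w.1 h
  lex_coh v w v' w' h1 h2 h3 h4 := T.lex_coh v.1 w.1 v'.1 w'.1 h1 h2 h3 h4

/-- The initial subtree `T^v` as an ordered tree. -/
def OTree.init (T : OTree β) (v : β) : OTree (T.initSeg v) :=
  T.restrict (T.initSeg v) ⟨v, T.lin_refl v⟩
    (fun a b hab hb => T.lin_trans a b v (T.tle_lin a b hab) hb)

/-- A leaf: a `⊑`-maximal vertex. -/
def OTree.Leaf (T : OTree β) (y : β) : Prop := ∀ w, T.tle y w → w = y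

/-- Strict lexicographic order. -/
def linLt (T : OTree β) (v w : β) : Prop := T.lin v w ∧ v ≠ w

/-- `y` is `i`-conjugate to `x` (for leaves `x` of `S`, `y` of `T`). -/
def Conj (S : OTree α) (T : OTree β) (i : α → β) (x : α) (y : β) : Prop :=
  S.Leaf x ∧ T.Leaf y ∧
  (((∀ z, S.Leaf z → S.lin z x) ∧ (∀ z, T.Leaf z → T.lin z y)) ∨
   (∃ x', S.Leaf x' ∧ linLt S x x' ∧ (∀ z, S.Leaf z → linLt S x z → S.lin x' z) ∧
      linLt T y (i x') ∧ T.meet (i x) (i x') = T.meet y (i x') ∧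
      (∀ z, T.Leaf z → linLt T z (i x') → T.meet (i x) (i x') = T.meet z (i x') → T.lin z y)))


lemma finset_max_of_total {α : Type} (r : α → α → Prop)
    (htr : ∀ a b c, r a b → r b c → r a c) (s : Finset α) (hs : s.Nonempty)
    (htot : ∀ a ∈ s, ∀ b ∈ s, r a b ∨ r b a) : ∃ m ∈ s, ∀ a ∈ s, r a m := by
  classical
  induction s using Finset.induction_on with
  | empty => exact absurd hs (by simp)
  | @insert a s ha ih =>
    by_cases hse : s.Nonempty
    · obtain ⟨m, hm, hmax⟩ := ih hse (fun x hx y hy =>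
        htot x (Finset.mem_insert_of_mem hx) y (Finset.mem_insert_of_mem hy))
      have hmA : m ∈ insert a s := Finset.mem_insert_of_mem hm
      rcases htot a (Finset.mem_insert_self a s) m hmA with h | h
      · exact ⟨m, hmA, fun x hx => by
          rcases Finset.mem_insert.1 hx with rfl | hx
          · exact h
          · exact hmax x hx⟩
      · refine ⟨a, Finset.mem_insert_self a s, fun x hx => ?_⟩
        rcases Finset.mem_insert.1 hx with rfl | hx
        · rcases htot x (Finset.mem_insert_self x s) x (Finset.mem_insert_self x s) with h' | h' <;> exact h'
        · exact htr x m a (hmax x hx) h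
    · simp only [Finset.not_nonempty_iff_eq_empty] at hse
      subst hse
      refine ⟨a, Finset.mem_insert_self a _, fun x hx => ?_⟩
      simp only [Finset.mem_insert, Finset.notMem_empty, or_false] at hx
      subst hx
      rcases htot x (Finset.mem_insert_self x _) x (Finset.mem_insert_self x _) with h | h <;> exact h

lemma embed_reflects_tle {α β : Type} [Finite α] [Finite β]
    (S : OTree α) (T : OTree β) (e : α → β) (he : IsEmbedding S T e)
    {v w : α} (h : T.tle (e v) (e w)) : S.tle v w := by
  have hmeet : T.meet (e v) (e w) = e v :=
    T.tle_antisymm _ _ (T.meet_le_left _ _) (T.le_meet _ _ _ (T.tle_refl _) h)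
  have : e (S.meet v w) = e v := by rw [he.1.1]; exact hmeet
  have h2 : S.meet v w = v := he.2 this
  have := S.meet_le_right v w
  rwa [h2] at this

/-- Every embedding `e : S → T` is the injection of some rigid surjection `f : T → S`;
explicitly `f w` is the `⊑_S`-largest `v` with `e v ⊑_T w`. -/
theorem stmt3 (S : OTree α) (T : OTree β) (e : α → β) (he : IsEmbedding S T e) :
    ∃ f : β → α, IsInjectionOf T S f e ∧ ∀ w v, T.tle (e v) w → S.tle v (f w) := by
  classical
  have H : ∀ w, ∃ m, T.tle (e m) w ∧ ∀ v, T.tle (e v) w → S.tle v m := by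
    intro w
    have hfin : Set.Finite {v | T.tle (e v) w} := Set.toFinite _
    obtain ⟨m, hm, hmax⟩ := finset_max_of_total S.tle (S.tle_trans) hfin.toFinset
      ⟨S.root, by simpa [he.1.2.2] using T.root_le w⟩
      (fun a ha b hb => by
        simp only [Set.Finite.mem_toFinset, Set.mem_setOf_eq] at ha hb
        rcases T.pred_chain w (e a) (e b) ha hb with h | h
        · exact Or.inl (embed_reflects_tle S T e he h)
        · exact Or.inr (embed_reflects_tle S T e he h))
    simp only [Set.Finite.mem_toFinset, Set.mem_setOf_eq] at hm
    exact ⟨m, hm, fun v hv => hmax v (by simpa using hv)⟩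
  choose f hf1 hf2 using H
  refine ⟨f, ⟨he.1, fun v => ?_, fun w => hf1 w⟩, fun w v h => hf2 w v h⟩
  exact S.tle_antisymm _ _ (embed_reflects_tle S T e he (hf1 (e v)))
    (hf2 (e v) v (T.tle_refl _))
end

section
/- Let f : T → S be a rigid surjection between ordered trees and let T' ⊆ T be a subtree (nonempty and downward closed under ⊑_T). Then f[T'] is a subtree of S, and the restriction f↾T' : T' → f[T'] is a rigid surjection (with the restriction of the injection of f as its injection). -/
variable {α β γ : Type} [Finite α] [Finite β] [Finite γ]

lemma e_tle {S : OTree α} {T : OTree β} {f : β → α} {e : α → β}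
    (hf : IsInjectionOf T S f e) (v w : α) (h : S.tle v w) : T.tle (e v) (e w) := by
  have hm := hf.1.1
  have hv : S.meet v w = v := S.tle_antisymm _ _ (S.meet_le_left v w)
    (S.le_meet v v w (S.tle_refl v) h)
  have := hm v w
  rw [hv] at this
  rw [this]
  exact T.meet_le_right _ _

/-- The image of a subtree under a rigid surjection is a subtree, and the restriction
is a rigid surjection whose injection is the restriction of the original injection. -/
theorem stmt4 (S : OTree α) (T : OTree β) (f : β → α) (e : α → β)
    (hf : IsInjectionOf T S f e) (T' : Set β) (hne : T'.Nonempty)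
    (hdc : ∀ v w, T.tle v w → w ∈ T' → v ∈ T') :
    (f '' T').Nonempty ∧ (∀ v w, S.tle v w → w ∈ f '' T' → v ∈ f '' T') ∧
    Set.MapsTo e (f '' T') T' ∧
    ∃ (hS : (f '' T').Nonempty) (hSdc : ∀ v w, S.tle v w → w ∈ f '' T' → v ∈ f '' T')
      (hm : Set.MapsTo f T' (f '' T')) (hm' : Set.MapsTo e (f '' T') T'),
      IsInjectionOf (T.restrict T' hne hdc) (S.restrict (f '' T') hS hSdc)
        (Set.MapsTo.restrict _ _ _ hm) (Set.MapsTo.restrict _ _ _ hm') := by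
  obtain ⟨⟨hmeet, hlin, hroot⟩, hfe, hef⟩ := hf
  have hmaps : Set.MapsTo e (f '' T') T' := by
    rintro v ⟨t, ht, rfl⟩
    have h1 : T.tle (e (f t)) t := hef t
    exact hdc _ _ h1 ht
  have hSne : (f '' T').Nonempty := hne.image f
  have hSdc : ∀ v w, S.tle v w → w ∈ f '' T' → v ∈ f '' T' := by
    rintro v w hvw ⟨t, ht, rfl⟩
    have h1 : T.tle (e v) (e (f t)) := e_tle ⟨⟨hmeet, hlin, hroot⟩, hfe, hef⟩ v (f t) hvw
    have h2 : T.tle (e v) t := T.tle_trans _ _ _ h1 (hef t)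
    exact ⟨e v, hdc _ _ h2 ht, hfe v⟩
  refine ⟨hSne, hSdc, hmaps, hSne, hSdc, Set.mapsTo_image f T', hmaps, ?_⟩
  refine ⟨⟨?_, ?_, ?_⟩, ?_, ?_⟩
  · intro v w
    exact Subtype.ext (hmeet v.1 w.1)
  · intro v w h
    exact hlin v.1 w.1 h
  · exact Subtype.ext hroot
  · intro v
    exact Subtype.ext (hfe v.1)
  · intro w
    exact hef w.1
end

section
/- Let f : T → S be a rigid surjection with injection i, and let v ∈ S. Writing T^{i(v)} = {w ∈ T : w ≤_T i(v)} and S^v = {w ∈ S : w ≤_S v}, the restriction f^v = f↾T^{i(v)} maps T^{i(v)} onto S^v and is a sealed rigid surjection from T^{i(v)} to S^v. -/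
variable {α β γ : Type} [Finite α] [Finite β] [Finite γ]

/-- For a rigid surjection `f : T → S` with injection `i` and `v ∈ S`, the restriction
`f^v = f ↾ T^{i v}` maps `T^{i v}` onto `S^v` and is a sealed rigid surjection. -/
theorem stmt5 (S : OTree α) (T : OTree β) (f : β → α) (i : α → β)
    (hf : IsInjectionOf T S f i) (v : α) :
    ∃ hm : Set.MapsTo f (T.initSeg (i v)) (S.initSeg v),
      Set.SurjOn f (T.initSeg (i v)) (S.initSeg v) ∧
      IsSealedRS (T.init (i v)) (S.init v) (Set.MapsTo.restrict _ _ _ hm) := by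
  obtain ⟨⟨hmeet, hlin, hroot⟩, hfi, hif⟩ := hf
  -- lin reflection
  have hrefl : ∀ a b, T.lin (i a) (i b) → S.lin a b := by
    intro a b h
    rcases S.lin_total a b with h' | h'
    · exact h'
    · have := T.lin_antisymm _ _ h (hlin _ _ h')
      have : a = b := by
        have := congrArg f this
        simpa [hfi] using this
      exact this ▸ S.lin_refl a
  have hm : Set.MapsTo f (T.initSeg (i v)) (S.initSeg v) := by
    intro w hw
    exact hrefl _ _ (T.lin_trans _ _ _ (T.tle_lin _ _ (hif w)) hw)
  refine ⟨hm, ?_, ?_⟩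
  · intro s hs
    exact ⟨i s, hlin _ _ hs, hfi s⟩
  · -- restricted injection
    have hiv : ∀ s : S.initSeg v, i s.1 ∈ T.initSeg (i v) := fun s => hlin _ _ s.2
    refine ⟨fun s => ⟨i s.1, hiv s⟩, ⟨⟨?_, ?_, ?_⟩, ?_, ?_⟩, ?_⟩
    · intro a b
      exact Subtype.ext (hmeet a.1 b.1)
    · intro a b h
      exact hlin a.1 b.1 h
    · exact Subtype.ext hroot
    · intro a
      exact Subtype.ext (hfi a.1)
    · intro w
      exact hif w.1
    · intro s t hs ht
      have hs' : s = ⟨v, S.lin_refl v⟩ :=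
        Subtype.ext (S.lin_antisymm _ _ s.2 (hs ⟨v, S.lin_refl v⟩))
      have ht' : t = ⟨i v, T.lin_refl (i v)⟩ :=
        Subtype.ext (T.lin_antisymm _ _ t.2 (ht ⟨i v, T.lin_refl (i v)⟩))
      subst hs'; subst ht'
      rfl
end

section
/- A function f : [n] → [m] between the linear orders [n] = {1,…,n} and [m] = {1,…,m}, regarded as ordered trees in which the tree order equals the linear order, is a rigid surjection in the Galois-connection sense (there is a morphism e : [m] → [n] with f ∘ e = id and e ∘ f ≤ id pointwise) if and only if f is surjective and for every y ∈ [n], f(y) ≤ 1 + max_{x < y} f(x) (with max over the empty set equal to 0). Moreover, in this case the injection of f is e(x) = min f⁻¹(x). -/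
/-- Prömel–Voigt characterization of rigid surjections between linear orders
(here `[n]` is modelled 0-indexed by `Fin n`, the tree order coinciding with the
linear order, root `0`, meets being minima): `f : Fin n → Fin m` admits a
morphism `e` (monotone, root-preserving) with `f ∘ e = id` and `e ∘ f ≤ id`
iff `f` is surjective and `f y ≤ sup_{x<y} (f x + 1)` (sup over `∅` being `0`)
for all `y`; and in that case any such `e` is given by `e x = min f⁻¹(x)`. -/
theorem stmt8 (n m : ℕ) (hn : 0 < n) (hm : 0 < m) (f : Fin n → Fin m) :
    ((∃ e : Fin m → Fin n, Monotone e ∧ e ⟨0, hm⟩ = ⟨0, hn⟩ ∧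
        (∀ x, f (e x) = x) ∧ (∀ w, e (f w) ≤ w)) ↔
      (Function.Surjective f ∧ ∀ y : Fin n,
        (f y : ℕ) ≤ (Finset.univ.filter (fun x => x < y)).sup (fun x => (f x : ℕ) + 1))) ∧
    (∀ e : Fin m → Fin n,
      (Monotone e ∧ e ⟨0, hm⟩ = ⟨0, hn⟩ ∧ (∀ x, f (e x) = x) ∧ (∀ w, e (f w) ≤ w)) →
      ∀ x : Fin m, f (e x) = x ∧ ∀ w, f w = x → e x ≤ w) := by
  constructor
  · constructor
    · rintro ⟨e, hmono, h0, hfe, hef⟩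
      refine ⟨fun x => ⟨e x, hfe x⟩, fun y => ?_⟩
      rcases Nat.eq_zero_or_pos (f y : ℕ) with h | h
      · simp [h]
      · set v : Fin m := ⟨(f y : ℕ) - 1, by omega⟩ with hv
        have hvle : v ≤ f y := by rw [Fin.le_def]; exact Nat.sub_le _ _
        have hne : e v ≠ y := by
          intro hcontra
          have h2 : f y = v := by rw [← hcontra, hfe]
          have h3 : (f y : ℕ) = (v : ℕ) := congrArg Fin.val h2
          have h4 : (v : ℕ) = (f y : ℕ) - 1 := rfl
          omega
        have hlt : e v < y := lt_of_le_of_ne ((hmono hvle).trans (hef y)) hne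
        have hmem : e v ∈ Finset.univ.filter (fun x => x < y) := by simp [hlt]
        have hle : (f (e v) : ℕ) + 1 ≤
            (Finset.univ.filter (fun x => x < y)).sup (fun x => (f x : ℕ) + 1) :=
          Finset.le_sup (f := fun x => ((f x : ℕ) + 1)) hmem
        have hfev : (f (e v) : ℕ) = (f y : ℕ) - 1 := by rw [hfe]
        omega
    · rintro ⟨hsurj, hcond⟩
      have hfib : ∀ x : Fin m, (Finset.univ.filter (fun w => f w = x)).Nonempty := by
        intro x
        obtain ⟨w, hw⟩ := hsurj x
        exact ⟨w, by simp [hw]⟩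
      set e : Fin m → Fin n := fun x => (Finset.univ.filter (fun w => f w = x)).min' (hfib x)
        with he
      have hfe : ∀ x, f (e x) = x := by
        intro x
        have := Finset.min'_mem _ (hfib x)
        simpa [he] using this
      have hef : ∀ w, e (f w) ≤ w := by
        intro w
        exact Finset.min'_le _ _ (by simp)
      have claim : ∀ k, ∀ y : Fin n, (y : ℕ) = k → ∀ v : Fin m, v ≤ f y →
          ∃ z, z ≤ y ∧ f z = v := by
        intro k
        induction k using Nat.strong_induction_on with
        | _ k ih =>
          intro y hy v hv
          rcases eq_or_lt_of_le hv with h | h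
          · exact ⟨y, le_refl _, h.symm⟩
          · have h1 : 1 ≤ (f y : ℕ) := by
              have : (v : ℕ) < (f y : ℕ) := h
              omega
            have hc := hcond y
            rcases (Finset.univ.filter (fun x => x < y)).eq_empty_or_nonempty with he' | hne
            · rw [he'] at hc; simp at hc; omega
            · obtain ⟨x, hxmem, hxsup⟩ :=
                Finset.exists_mem_eq_sup _ hne (fun x => (f x : ℕ) + 1)
              have hxy : x < y := by simpa using hxmem
              have hfx : (f y : ℕ) ≤ (f x : ℕ) + 1 := hxsup ▸ hc
              have hvx : v ≤ f x := by
                have h' : (v : ℕ) < (f y : ℕ) := h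
                rw [Fin.le_def]; omega
              obtain ⟨z, hz, hzf⟩ := ih (x : ℕ) (by omega) x rfl v hvx
              exact ⟨z, hz.trans hxy.le, hzf⟩
      have hlt : ∀ x : Fin m, ∀ z : Fin n, z < e x → f z < x := by
        intro x z hz
        by_contra hcon
        push_neg at hcon
        obtain ⟨z', hz', hfz'⟩ := claim (z : ℕ) z rfl x hcon
        have : e x ≤ z' := Finset.min'_le _ _ (by simp [hfz'])
        exact absurd (this.trans hz') (not_le.mpr hz)
      have hmono : Monotone e := by
        intro a b hab
        by_contra hcon
        push_neg at hcon
        have := hlt a (e b) hcon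
        rw [hfe] at this
        exact absurd hab (not_le.mpr this)
      have hf0 : f ⟨0, hn⟩ = ⟨0, hm⟩ := by
        have hc := hcond ⟨0, hn⟩
        have he' : (Finset.univ.filter (fun x => x < (⟨0, hn⟩ : Fin n))) = ∅ := by
          apply Finset.filter_eq_empty_iff.mpr
          intro x _
          simp [Fin.lt_def]
        rw [he'] at hc
        simp at hc
        exact Fin.ext hc
      have h0 : e ⟨0, hm⟩ = ⟨0, hn⟩ := by
        have h1 : e ⟨0, hm⟩ ≤ ⟨0, hn⟩ := by
          have := hef ⟨0, hn⟩
          rwa [hf0] at this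
        have h2 : (⟨0, hn⟩ : Fin n) ≤ e ⟨0, hm⟩ := by simp [Fin.le_def]
        exact le_antisymm h1 h2
      exact ⟨e, hmono, h0, hfe, hef⟩
  · rintro e ⟨hmono, h0, hfe, hef⟩ x
    exact ⟨hfe x, fun w hw => hw ▸ hef w⟩
end

section
/- Let i : S → T and j : T → V be embeddings of ordered trees, and let x ∈ ℓ(S), y ∈ ℓ(T), z ∈ ℓ(V) be leaves. If y is i-conjugate to x and z is j-conjugate to y, then z is (j ∘ i)-conjugate to x. -/
variable {α β γ : Type} [Finite α] [Finite β] [Finite γ]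

/-!
Let `x'` be the leaf following `x` and `y'` the leaf following `y`, and put `m = y ∧ i x'`,
`n = y' ∧ i x'`. The leaf `y'` lies lexicographically between `y` and any leaf above `i x'`,
which forces `m ⊏ n`, so `y'` and `i x'` leave `m` through the same child. After applying the
embedding `j` this still holds for `j m ⊏ j n`, hence a leaf `u` of `V` satisfies
`u < j y'` and `u ∧ j y' = j m` exactly when `u < j (i x')` and `u ∧ j (i x') = j m`:
the leaves competing to be `j`-conjugate to `y` and `(j ∘ i)`-conjugate to `x` are the same.
-/

namespace OTree

variable (T : OTree β)

lemma meet_eq_left {a b : β} (h : T.tle a b) : T.meet a b = a :=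
  T.tle_antisymm _ _ (T.meet_le_left a b) (T.le_meet a a b (T.tle_refl a) h)

lemma exists_tle_leaf (v : β) : ∃ w, T.tle v w ∧ T.Leaf w := by
  let _ : Preorder β :=
    { le := T.tle, le_refl := T.tle_refl, le_trans := T.tle_trans }
  obtain ⟨w, hvw, hw⟩ := Finite.exists_le_maximal (p := fun _ => True) (a := v) trivial
  exact ⟨w, hvw, fun u hwu => T.tle_antisymm _ _ (hw.2 trivial hwu) hwu⟩

lemma exists_leaf_linLt {y a : β} (hya : linLt T y a) :
    ∃ w, T.tle a w ∧ T.Leaf w ∧ linLt T y w := by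
  obtain ⟨w, haw, hw⟩ := T.exists_tle_leaf a
  refine ⟨w, haw, hw, T.lin_trans _ _ _ hya.1 (T.tle_lin _ _ haw), ?_⟩
  rintro rfl
  exact hya.2 (T.lin_antisymm _ _ hya.1 (T.tle_lin _ _ haw))

lemma meet_tle_of_lin_of_lin {u v w : β} (huv : T.lin u v) (hvw : T.lin v w) :
    T.tle (T.meet u w) v := by
  by_contra hmv
  have hvu : T.lin v u := by
    by_cases hvm : T.tle v (T.meet u w)
    · exact T.tle_lin _ _ (T.tle_trans _ _ _ hvm (T.meet_le_left u w))
    · have hcoh := T.lex_coh v (T.meet u w)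
      exact (hcoh v u (T.tle_refl v) (T.meet_le_left u w) hvm hmv).2
        ((hcoh v w (T.tle_refl v) (T.meet_le_right u w) hvm hmv).1 hvw)
  obtain rfl := T.lin_antisymm _ _ huv hvu
  exact hmv (T.meet_le_left u w)

lemma meet_tle_meet_of_not_tle {n a b u : β} (hna : T.tle n a) (hnb : T.tle n b)
    (hnu : ¬ T.tle n u) : T.tle (T.meet u a) (T.meet u b) := by
  refine T.le_meet _ _ _ (T.meet_le_left u a) ?_
  rcases T.pred_chain a _ _ (T.meet_le_right u a) hna with h | h
  · exact T.tle_trans _ _ _ h hnb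
  · exact absurd (T.tle_trans _ _ _ h (T.meet_le_left u a)) hnu

lemma linLt_and_meet_eq_iff {m n a b u : β} (hmn : T.tle m n) (hne : m ≠ n)
    (hna : T.tle n a) (hnb : T.tle n b) (hu : T.Leaf u) :
    linLt T u a ∧ T.meet u a = m ↔ linLt T u b ∧ T.meet u b = m := by
  suffices key : ∀ {a b}, T.tle n a → T.tle n b →
      linLt T u a ∧ T.meet u a = m → linLt T u b ∧ T.meet u b = m from
    ⟨key hna hnb, key hnb hna⟩
  intro a b hna hnb ⟨hua, hma⟩
  have hnu : ¬ T.tle n u := fun h =>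
    hne (T.tle_antisymm _ _ hmn (hma ▸ T.le_meet _ _ _ h hna))
  have hun : ¬ T.tle u n := fun h => hnu (hu n h ▸ T.tle_refl n)
  have hcoh := T.lex_coh u n
  refine ⟨⟨(hcoh u b (T.tle_refl u) hnb hun hnu).2
      ((hcoh u a (T.tle_refl u) hna hun hnu).1 hua.1), ?_⟩, ?_⟩
  · rintro rfl
    exact hnu hnb
  · rw [← hma]
    exact T.tle_antisymm _ _ (T.meet_tle_meet_of_not_tle hnb hna hnu)
      (T.meet_tle_meet_of_not_tle hna hnb hnu)

lemma meet_tle_meet_of_next_leaf {y y' a : β} (hy' : T.Leaf y') (hya : linLt T y a)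
    (hyy' : linLt T y y') (hnext : ∀ w, T.Leaf w → linLt T y w → T.lin y' w)
    (hmax : ∀ w, T.Leaf w → linLt T w a → T.meet y a = T.meet w a → T.lin w y) :
    T.tle (T.meet y a) (T.meet y' a) ∧ T.meet y a ≠ T.meet y' a := by
  obtain ⟨w, haw, hw, hyw⟩ := T.exists_leaf_linLt hya
  have hy'w := hnext w hw hyw
  have hmw : T.tle (T.meet y a) (T.meet y w) :=
    T.le_meet _ _ _ (T.meet_le_left y a) (T.tle_trans _ _ _ (T.meet_le_right y a) haw)
  have hmy' := T.tle_trans _ _ _ hmw (T.meet_tle_of_lin_of_lin hyy'.1 hy'w)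
  refine ⟨T.le_meet _ _ _ hmy' (T.meet_le_right y a), fun hmn => ?_⟩
  have hay : ¬ T.tle a y := fun h => hya.2 (T.lin_antisymm _ _ hya.1 (T.tle_lin _ _ h))
  by_cases hy'a : linLt T y' a
  · exact hyy'.2 (T.lin_antisymm _ _ hyy'.1 (hmax y' hy' hy'a hmn))
  · have hay' : T.tle a y' := by
      rcases T.lin_total y' a with h | h
      · obtain rfl : y' = a := not_not.1 fun hne => hy'a ⟨h, hne⟩
        exact T.tle_refl _
      · simpa only [T.meet_eq_left haw] using T.meet_tle_of_lin_of_lin h hy'w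
    exact hay (T.tle_trans _ _ _ (hmn ▸ T.le_meet _ _ _ hay' (T.tle_refl a))
      (T.meet_le_left y a))

end OTree

lemma IsMorphism.tle_map {S : OTree α} {T : OTree β} {e : α → β} (he : IsMorphism S T e)
    {a b : α} (hab : S.tle a b) : T.tle (e a) (e b) := by
  simpa only [← he.1, S.meet_eq_left hab] using T.meet_le_right (e a) (e b)

theorem stmt9_general (S : OTree α) (T : OTree β) (V : OTree γ) (i : α → β) (j : β → γ)
    (hj : IsEmbedding T V j)
    (x : α) (y : β) (z : γ)
    (hxy : Conj S T i x y) (hyz : Conj T V j y z) :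
    Conj S V (j ∘ i) x z := by
  obtain ⟨hx, hy, hxy⟩ := hxy
  obtain ⟨-, hz, hyz⟩ := hyz
  refine ⟨hx, hz, ?_⟩
  rcases hxy with ⟨hxlast, hylast⟩ | ⟨x', hx', hxx', hx'next, hyx', hmeet, hymax⟩
  · rcases hyz with ⟨-, hzlast⟩ | ⟨y', hy', hyy', -⟩
    · exact Or.inl ⟨hxlast, hzlast⟩
    · exact absurd (T.lin_antisymm _ _ hyy'.1 (hylast y' hy')) hyy'.2
  rcases hyz with ⟨hylast, -⟩ | ⟨y', hy', hyy', hy'next, hzy', hmeet', hzmax⟩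
  · obtain ⟨w, -, hw, hyw⟩ := T.exists_leaf_linLt hyx'
    exact absurd (T.lin_antisymm _ _ hyw.1 (hylast w hw)) hyw.2
  rw [hmeet] at hymax
  obtain ⟨hmn, hne⟩ := T.meet_tle_meet_of_next_leaf hy' hyx' hyy' hy'next hymax
  have hyy'm : T.meet y y' = T.meet y (i x') :=
    ((T.linLt_and_meet_eq_iff hmn hne (T.meet_le_right _ _) (T.meet_le_left _ _) hy).1
      ⟨hyx', rfl⟩).2
  have same_branch := fun u (hu : V.Leaf u) => V.linLt_and_meet_eq_iff (hj.1.tle_map hmn)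
    (hj.2.ne hne) (hj.1.tle_map (T.meet_le_right _ _)) (hj.1.tle_map (T.meet_le_left _ _)) hu
  have hjy : V.meet (j y) (j y') = j (T.meet y (i x')) := by rw [← hj.1.1, hyy'm]
  have hjx : V.meet (j (i x)) (j (i x')) = j (T.meet y (i x')) := by rw [← hj.1.1, hmeet]
  obtain ⟨hzx', hzm⟩ := (same_branch z hz).2 ⟨hzy', hmeet'.symm.trans hjy⟩
  refine Or.inr ⟨x', hx', hxx', hx'next, hzx', hjx.trans hzm.symm, fun u hu hux' hum => ?_⟩
  obtain ⟨huy', hum'⟩ := (same_branch u hu).1 ⟨hux', hum.symm.trans hjx⟩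
  exact hzmax u hu huy' (hjy.trans hum'.symm)

/-- Transitivity of conjugacy of leaves along embeddings. -/
theorem stmt9 (S : OTree α) (T : OTree β) (V : OTree γ) (i : α → β) (j : β → γ)
    (hi : IsEmbedding S T i) (hj : IsEmbedding T V j)
    (x : α) (y : β) (z : γ)
    (hxy : Conj S T i x y) (hyz : Conj T V j y z) :
    Conj S V (j ∘ i) x z :=
  stmt9_general S T V i j hj x y z hxy hyz
end

section
/- Let i : S → T be an embedding of ordered trees, let x ∈ ℓ(S) be a non-largest leaf, and let x' be the ≤_S-smallest leaf with x <_S x'. Then the set {y ∈ ℓ(T) : i(x) ≤_T y <_T i(x') and i(x) ∧_T i(x') = y ∧_T i(x')} is nonempty (it contains every leaf above i(x)), and its ≤_T-largest element is the unique leaf of T that is i-conjugate to x. -/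
variable {α β γ : Type} [Finite α] [Finite β] [Finite γ]

/-!
Distinct leaves `x`, `x'` are incomparable in `S`, and since an embedding preserves meets
injectively, `i x` and `i x'` are incomparable in `T`. For a leaf `y ⊒ i x`, lexicographic
coherence above these two incomparable vertices turns `i x <_T i x'` into `y <_T i x'`, and
`y ∧ i x' = i x ∧ i x'` because the predecessors of `y` form a chain. So the candidate set is
nonempty and, `T` being finite, has a `≤_T`-largest element; as the smallest leaf above `x` is
unique, being `i`-conjugate to `x` means exactly being that element.
-/

namespace OTree

theorem exists_leaf_tle (T : OTree β) (v : β) : ∃ y, T.Leaf y ∧ T.tle v y := by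
  let : PartialOrder β :=
    { le := T.tle, le_refl := T.tle_refl, le_trans := T.tle_trans,
      le_antisymm := T.tle_antisymm }
  obtain ⟨y, hvy, hy⟩ := Finite.exists_le_maximal (p := fun _ : β => True) (a := v) trivial
  exact ⟨y, fun w hyw => le_antisymm (hy.2 trivial hyw) hyw, hvy⟩

theorem exists_lin_greatest (T : OTree β) {P : β → Prop} (hP : ∃ y, P y) :
    ∃ y, P y ∧ ∀ z, P z → T.lin z y := by
  let : LinearOrder β :=
    { le := T.lin, le_refl := T.lin_refl, le_trans := T.lin_trans,
      le_antisymm := T.lin_antisymm, le_total := T.lin_total,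
      toDecidableLE := Classical.decRel _ }
  obtain ⟨v, hv⟩ := hP
  obtain ⟨y, -, hy⟩ := Finite.exists_le_maximal (p := P) hv
  exact ⟨y, hy.1, fun z hz => (le_total z y).elim id (hy.2 hz)⟩

theorem Leaf.not_tle_of_ne {T : OTree β} {x w : β} (hx : T.Leaf x) (hxw : x ≠ w) :
    ¬ T.tle x w :=
  fun h => hxw (hx w h).symm

theorem meet_eq_left_of_tle (T : OTree β) {v w : β} (h : T.tle v w) : T.meet v w = v :=
  T.tle_antisymm _ _ (T.meet_le_left v w) (T.le_meet v v w (T.tle_refl v) h)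

theorem not_tle_of_tle_of_not_tle (T : OTree β) {a b y : β} (hay : T.tle a y)
    (hab : ¬ T.tle a b) : ¬ T.tle y b :=
  fun hyb => hab (T.tle_trans a y b hay hyb)

theorem meet_eq_meet_of_tle (T : OTree β) {a b y : β} (hay : T.tle a y) (hab : ¬ T.tle a b) :
    T.meet a b = T.meet y b := by
  have hya : T.tle (T.meet y b) a :=
    (T.pred_chain y (T.meet y b) a (T.meet_le_left y b) hay).resolve_right
      fun h => hab (T.tle_trans _ _ _ h (T.meet_le_right y b))
  exact T.tle_antisymm _ _
    (T.le_meet _ _ _ (T.tle_trans _ _ _ (T.meet_le_left a b) hay) (T.meet_le_right a b))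
    (T.le_meet _ _ _ hya (T.meet_le_right y b))

end OTree

theorem IsEmbedding.not_tle {S : OTree α} {T : OTree β} {i : α → β} (hi : IsEmbedding S T i) {a b : α}
    (hab : ¬ S.tle a b) : ¬ T.tle (i a) (i b) := by
  intro h
  have hmeet : S.meet a b = a := hi.2 ((hi.1.1 a b).trans (T.meet_eq_left_of_tle h))
  exact hab (hmeet ▸ S.meet_le_right a b)

def ConjCandidate (T : OTree β) (u v y : β) : Prop :=
  T.Leaf y ∧ linLt T y v ∧ T.meet u v = T.meet y v

theorem conj_iff_isGreatest_conjCandidate {S : OTree α} {T : OTree β} {i : α → β} {x x' : α}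
    (hx : S.Leaf x)
    (hx' : S.Leaf x' ∧ linLt S x x' ∧ ∀ z, S.Leaf z → linLt S x z → S.lin x' z) (y : β) :
    Conj S T i x y ↔
      ConjCandidate T (i x) (i x') y ∧ ∀ z, ConjCandidate T (i x) (i x') z → T.lin z y := by
  obtain ⟨hx'leaf, hxx', hx'min⟩ := hx'
  constructor
  · rintro ⟨-, hy, ⟨hxmax, -⟩ | ⟨x'', hx''leaf, hxx'', hx''min, hyx'', hmeet, hymax⟩⟩
    · exact absurd (S.lin_antisymm _ _ hxx'.1 (hxmax x' hx'leaf)) hxx'.2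
    · obtain rfl : x'' = x' :=
        S.lin_antisymm _ _ (hx''min x' hx'leaf hxx') (hx'min x'' hx''leaf hxx'')
      exact ⟨⟨hy, hyx'', hmeet⟩, fun z ⟨hz, hzx', hzmeet⟩ => hymax z hz hzx' hzmeet⟩
  · rintro ⟨⟨hy, hyx', hmeet⟩, hymax⟩
    exact ⟨hx, hy, Or.inr ⟨x', hx'leaf, hxx', hx'min, hyx', hmeet,
      fun z hz hzx' hzmeet => hymax z ⟨hz, hzx', hzmeet⟩⟩⟩

theorem conjCandidate_of_tle {S : OTree α} {T : OTree β} {i : α → β} (hi : IsEmbedding S T i)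
    {x x' : α} (hx : S.Leaf x) (hx' : S.Leaf x') (hxx' : linLt S x x') {y : β} (hy : T.Leaf y)
    (hxy : T.tle (i x) y) : ConjCandidate T (i x) (i x') y := by
  have hni : ¬ T.tle (i x) (i x') := hi.not_tle (hx.not_tle_of_ne hxx'.2)
  have hni' : ¬ T.tle (i x') (i x) := hi.not_tle (hx'.not_tle_of_ne hxx'.2.symm)
  have hyx' : ¬ T.tle y (i x') := T.not_tle_of_tle_of_not_tle hxy hni
  refine ⟨hy, ⟨?_, fun h => hyx' (h ▸ T.tle_refl y)⟩, T.meet_eq_meet_of_tle hxy hni⟩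
  exact (T.lex_coh _ _ _ _ hxy (T.tle_refl _) hni hni').mpr (hi.1.2.1 x x' hxx'.1)

/-- For an embedding `i : S → T` and a non-largest leaf `x` of `S` with `x'` the
smallest leaf above it, the set `{y ∈ ℓ(T) : i x ≤ y < i x' and i x ∧ i x' = y ∧ i x'}`
is nonempty (it contains every leaf above `i x`), and its largest element is the
unique leaf of `T` that is `i`-conjugate to `x`. -/
theorem stmt10 (S : OTree α) (T : OTree β) (i : α → β) (hi : IsEmbedding S T i)
    (x : α) (hx : S.Leaf x) (x' : α)
    (hx' : S.Leaf x' ∧ linLt S x x' ∧ ∀ z, S.Leaf z → linLt S x z → S.lin x' z) :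
    (∃ y, T.Leaf y ∧ T.tle (i x) y) ∧
    (∀ y, T.Leaf y → T.tle (i x) y →
      T.lin (i x) y ∧ linLt T y (i x') ∧ T.meet (i x) (i x') = T.meet y (i x')) ∧
    (∃! y, Conj S T i x y) ∧
    (∀ y, Conj S T i x y →
      (T.Leaf y ∧ T.lin (i x) y ∧ linLt T y (i x') ∧
        T.meet (i x) (i x') = T.meet y (i x')) ∧
      ∀ z, T.Leaf z → T.lin (i x) z → linLt T z (i x') →
        T.meet (i x) (i x') = T.meet z (i x') → T.lin z y) := by
  have hcand : ∀ y, T.Leaf y → T.tle (i x) y → ConjCandidate T (i x) (i x') y :=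
    fun _ => conjCandidate_of_tle hi hx hx'.1 hx'.2.1
  have hconj := conj_iff_isGreatest_conjCandidate (T := T) (i := i) hx hx'
  obtain ⟨y₀, hy₀, hxy₀⟩ := T.exists_leaf_tle (i x)
  obtain ⟨y, hy, hymax⟩ := T.exists_lin_greatest ⟨y₀, hcand y₀ hy₀ hxy₀⟩
  refine ⟨⟨y₀, hy₀, hxy₀⟩, fun y hy hxy => ⟨T.tle_lin _ _ hxy, (hcand y hy hxy).2⟩,
    ⟨y, (hconj y).2 ⟨hy, hymax⟩, fun w hw => ?_⟩, fun w hw => ?_⟩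
  · obtain ⟨hw, hwmax⟩ := (hconj w).1 hw
    exact T.lin_antisymm _ _ (hymax w hw) (hwmax y hy)
  · obtain ⟨⟨hwleaf, hwx', hwmeet⟩, hwmax⟩ := (hconj w).1 hw
    refine ⟨⟨hwleaf, ?_, hwx', hwmeet⟩, fun z hz _ hzx' hzmeet => hwmax z ⟨hz, hzx', hzmeet⟩⟩
    exact T.lin_trans _ _ _ (T.tle_lin _ _ hxy₀) (hwmax y₀ (hcand y₀ hy₀ hxy₀))
end

section
/- Let S, T, V be ordered trees, g : V → T and f : T → S rigid surjections, x ∈ ℓ(S), and y ∈ ℓ(T) the leaf f-conjugate to x. Then f_x ∘ g_y = (f ∘ g)_x, where for a rigid surjection h and a leaf w of its codomain, h_w denotes the restriction of h to the initial subtree below the leaf h-conjugate to w. -/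
variable {α β γ : Type} [Finite α] [Finite β] [Finite γ]

/-! ### Auxiliary lemmas -/

lemma OTree.meet_eq_of_tle (T : OTree α) {u v : α} (h : T.tle u v) : T.meet u v = u :=
  T.tle_antisymm _ _ (T.meet_le_left u v) (T.le_meet u u v (T.tle_refl u) h)

lemma OTree.tle_of_meet_eq (T : OTree α) {u v : α} (h : T.meet u v = u) : T.tle u v :=
  h ▸ T.meet_le_right u v

lemma mor_tle {S : OTree α} {T : OTree β} {e : α → β} (he : IsMorphism S T e)
    {u v : α} (h : S.tle u v) : T.tle (e u) (e v) :=
  T.tle_of_meet_eq (by rw [← he.1 u v, S.meet_eq_of_tle h])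

lemma mor_tle_reflect {S : OTree α} {T : OTree β} {e : α → β} (he : IsMorphism S T e)
    (hinj : Function.Injective e) {u v : α} (h : T.tle (e u) (e v)) : S.tle u v :=
  S.tle_of_meet_eq (hinj (by rw [he.1 u v]; exact T.meet_eq_of_tle h))

lemma finset_lin_max (T : OTree α) (s : Finset α) (hs : s.Nonempty) :
    ∃ m ∈ s, ∀ a ∈ s, T.lin a m := by
  classical
  induction s using Finset.induction_on with
  | empty => simp at hs
  | @insert x s hx ih =>
    rcases s.eq_empty_or_nonempty with rfl | hne
    · exact ⟨x, by simp, by simp [T.lin_refl]⟩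
    · obtain ⟨m, hm, hmax⟩ := ih hne
      rcases T.lin_total x m with h | h
      · refine ⟨m, Finset.mem_insert_of_mem hm, ?_⟩
        intro a ha
        rcases Finset.mem_insert.1 ha with rfl | ha
        · exact h
        · exact hmax a ha
      · refine ⟨x, Finset.mem_insert_self x _, ?_⟩
        intro a ha
        rcases Finset.mem_insert.1 ha with rfl | ha
        · exact T.lin_refl a
        · exact T.lin_trans _ _ _ (hmax a ha) h

lemma exists_leaf_above (T : OTree α) (v : α) : ∃ l, T.Leaf l ∧ T.tle v l := by
  classical
  have hfin : {w | T.tle v w}.Finite := Set.toFinite _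
  obtain ⟨m, hm, hmax⟩ := finset_lin_max T hfin.toFinset
    ⟨v, by simp [Set.Finite.mem_toFinset, T.tle_refl]⟩
  rw [Set.Finite.mem_toFinset] at hm
  refine ⟨m, ?_, hm⟩
  intro w hw
  have hvw : w ∈ hfin.toFinset := by
    rw [Set.Finite.mem_toFinset]; exact T.tle_trans _ _ _ hm hw
  exact T.lin_antisymm _ _ (hmax w hvw) (T.tle_lin _ _ hw)

lemma lin_of_top (T : OTree α) {y : α} (h : ∀ u, T.Leaf u → T.lin u y) (v : α) :
    T.lin v y := by
  obtain ⟨l, hl, hvl⟩ := exists_leaf_above T v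
  exact T.lin_trans _ _ _ (T.tle_lin _ _ hvl) (h l hl)

lemma leaf_not_tle_left {T : OTree α} {y t : α} (hy : T.Leaf y) (h : linLt T y t) :
    ¬ T.tle y t :=
  fun hh => h.2 (hy t hh).symm

lemma leaf_not_tle_right {T : OTree α} {y t : α} (h : linLt T y t) : ¬ T.tle t y :=
  fun hh => h.2 (T.lin_antisymm _ _ h.1 (T.tle_lin _ _ hh))

lemma coh (T : OTree α) {v w w' : α} (h1 : T.tle w w') (h2 : ¬ T.tle v w)
    (h3 : ¬ T.tle w v) : T.lin v w' ↔ T.lin v w :=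
  T.lex_coh v w v w' (T.tle_refl v) h1 h2 h3

/-- If `y` is a leaf, `y'` is `≤`-above every leaf strictly `≤`-above `y`, and
`y <ₗ v ≤ₗ y'`, then `v ⊑ y'`. -/
lemma between_tle (T : OTree α) {y y' : α} (hy : T.Leaf y)
    (hnext : ∀ u, T.Leaf u → linLt T y u → T.lin y' u)
    {v : α} (h1 : linLt T y v) (h2 : T.lin v y') : T.tle v y' := by
  by_contra hvy'
  have hne : v ≠ y' := fun h => hvy' (h ▸ T.tle_refl v)
  obtain ⟨l, hl, hvl⟩ := exists_leaf_above T v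
  have hy'v : ¬ T.tle y' v := fun hh => hne (T.lin_antisymm _ _ h2 (T.tle_lin _ _ hh))
  have hnyv : ¬ T.tle y v := leaf_not_tle_left hy h1
  have hnvy : ¬ T.tle v y := leaf_not_tle_right h1
  have c1 : T.lin l y ↔ T.lin v y := T.lex_coh v y l y hvl (T.tle_refl y) hnvy hnyv
  have hvyF : ¬ T.lin v y := fun hh => h1.2 (T.lin_antisymm _ _ h1.1 hh)
  have hlyF : ¬ T.lin l y := fun hh => hvyF (c1.mp hh)
  have hyl : linLt T y l := by
    refine ⟨(T.lin_total y l).resolve_right hlyF, ?_⟩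
    rintro rfl
    exact hlyF (T.lin_refl y)
  have hy'l : T.lin y' l := hnext l hl hyl
  have c2 : T.lin l y' ↔ T.lin v y' := T.lex_coh v y' l y' hvl (T.tle_refl y') hvy' hy'v
  have hly' : l = y' := T.lin_antisymm _ _ (c2.mpr h2) hy'l
  exact hvy' (hly' ▸ hvl)

/-- The key lemma: a rigid surjection maps the initial segment below the conjugate
leaf into the initial segment below the original leaf. -/
lemma main_lemma (T : OTree β) (V : OTree γ) (g : γ → β) (j : β → γ)
    (hg : IsInjectionOf V T g j) {y : β} {z : γ} (hyz : Conj T V j y z) :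
    ∀ w, V.lin w z → T.lin (g w) y := by
  obtain ⟨hjmor, hgj, hjg⟩ := hg
  have hjinj : Function.Injective j := fun a b h => by rw [← hgj a, ← hgj b, h]
  obtain ⟨hy, hz, hcase⟩ := hyz
  intro w hw
  rcases hcase with ⟨hTtop, _⟩ | ⟨y', hy', hyy', hnext, hzy', hmeet, hmax⟩
  · exact lin_of_top T hTtop (g w)
  · by_contra hbY
    have hyb : linLt T y (g w) := by
      refine ⟨(T.lin_total y (g w)).resolve_right hbY, ?_⟩
      intro h
      exact hbY (h ▸ T.lin_refl y)
    have hjbz : V.lin (j (g w)) z := V.lin_trans _ _ _ (V.tle_lin _ _ (hjg w)) hw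
    have hby' : T.lin (g w) y' := by
      rcases T.lin_total (g w) y' with h | h
      · exact h
      · exfalso
        have h2 : V.lin (j y') (j (g w)) := hjmor.2.1 _ _ h
        exact hzy'.2 (V.lin_antisymm _ _ hzy'.1 (V.lin_trans _ _ _ h2 hjbz))
    have hbtle : T.tle (g w) y' := between_tle T hy hnext hyb hby'
    have hjm'' : j (T.meet y y') = V.meet (j y) (j y') := hjmor.1 y y'
    have hnbz : ¬ V.tle (j (g w)) z := by
      intro h
      have h2 : V.tle (j (g w)) (V.meet z (j y')) :=
        V.le_meet _ _ _ h (mor_tle hjmor hbtle)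
      rw [← hmeet, ← hjm''] at h2
      have h3 : T.tle (g w) (T.meet y y') := mor_tle_reflect hjmor hjinj h2
      have h4 : T.lin (g w) y := T.tle_lin _ _ (T.tle_trans _ _ _ h3 (T.meet_le_left y y'))
      exact hbY h4
    have hnzb : ¬ V.tle z (j (g w)) := fun h => hnbz (by rw [hz _ h]; exact V.tle_refl _)
    have c := coh V (mor_tle hjmor hbtle) hnzb hnbz
    have heq : z = j (g w) := V.lin_antisymm _ _ (c.mp hzy'.1) hjbz
    exact hnbz (by rw [← heq]; exact V.tle_refl z)

/-- `f_x ∘ g_y = (f ∘ g)_x`: the leaf `z` that is `g`-conjugate to `y` is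
`(f ∘ g)`-conjugate to `x` (the injection of `f ∘ g` being `j ∘ i`), so both sides
are the restriction of `w ↦ f (g w)` to `V^z`, mapping into `T^y` resp. `S^x`. -/
theorem stmt12 (S : OTree α) (T : OTree β) (V : OTree γ)
    (f : β → α) (g : γ → β) (i : α → β) (j : β → γ)
    (hf : IsInjectionOf T S f i) (hg : IsInjectionOf V T g j)
    (x : α) (y : β) (z : γ) (hxy : Conj S T i x y) (hyz : Conj T V j y z) :
    Conj S V (fun a => j (i a)) x z ∧
    ∀ w : γ, V.lin w z → T.lin (g w) y ∧ S.lin (f (g w)) x := by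
  have hmain2 : ∀ w, V.lin w z → T.lin (g w) y := main_lemma T V g j hg hyz
  have hmain1 : ∀ v, T.lin v y → S.lin (f v) x := main_lemma S T f i hf hxy
  obtain ⟨himor, hfi, hif⟩ := hf
  obtain ⟨hjmor, hgj, hjg⟩ := hg
  have hjinj : Function.Injective j := fun a b h => by rw [← hgj a, ← hgj b, h]
  obtain ⟨hx, hy, hcxy⟩ := hxy
  obtain ⟨hy2, hz, hcyz⟩ := hyz
  refine ⟨⟨hx, hz, ?_⟩, fun w hw => ⟨hmain2 w hw, hmain1 _ (hmain2 w hw)⟩⟩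
  rcases hcxy with ⟨hSx, hTy⟩ | ⟨x', hx', hxx', hnextS, hyix', hmT, hmaxT⟩
  · rcases hcyz with ⟨_, hVz⟩ | ⟨y'', hy'', hyy'', _, _, _, _⟩
    · exact Or.inl ⟨hSx, hVz⟩
    · exact absurd (T.lin_antisymm _ _ hyy''.1 (hTy y'' hy'')) hyy''.2
  · rcases hcyz with ⟨hTy2, _⟩ | ⟨y'', hy'', hyy'', hnextT, hzjy'', hmV, hmaxV⟩
    · exact absurd (T.lin_antisymm _ _ hyix'.1 (lin_of_top T hTy2 (i x'))) hyix'.2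
    · -- the main case: `x'` is the next leaf after `x` in `S`, `y''` the next leaf
      -- after `y` in `T`.
      have e2 : V.meet (j (i x)) (j (i x')) = j (T.meet y (i x')) :=
        (hjmor.1 (i x) (i x')).symm.trans (congrArg j hmT)
      set mT := T.meet y (i x') with hmTdef
      set m2 := T.meet y y'' with hm2def
      have hjm2 : j m2 = V.meet (j y) (j y'') := hjmor.1 y y''
      have hjm2z : V.tle (j m2) z := by
        rw [hjm2, hmV]; exact V.meet_le_left z (j y'')
      have hmTy : T.tle mT y := T.meet_le_left y (i x')
      have hmTix' : T.tle mT (i x') := T.meet_le_right y (i x')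
      have hm2y : T.tle m2 y := T.meet_le_left y y''
      have hm2y'' : T.tle m2 y'' := T.meet_le_right y y''
      have hnixy : ¬ T.lin (i x') y := fun h => hyix'.2 (T.lin_antisymm _ _ hyix'.1 h)
      by_cases hc : T.lin (i x') y''
      · -- CASE I : `i x' ≤ y''`, hence `i x' ⊑ y''`.
        have hix'y'' : T.tle (i x') y'' := between_tle T hy2 hnextT hyix' hc
        have hmTm2 : T.tle mT m2 :=
          T.le_meet _ _ _ hmTy (T.tle_trans _ _ _ hmTix' hix'y'')
        have hm2ix' : T.tle m2 (i x') := by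
          rcases T.pred_chain y'' m2 (i x') hm2y'' hix'y'' with h | h
          · exact h
          · exact absurd (T.tle_lin _ _ (T.tle_trans _ _ _ h hm2y)) hnixy
        have heqm : mT = m2 :=
          T.tle_antisymm _ _ hmTm2 (T.le_meet _ _ _ hm2y hm2ix')
        have hjmTz : V.tle (j mT) z := by rw [heqm]; exact hjm2z
        have hjmTjix' : V.tle (j mT) (j (i x')) := mor_tle hjmor hmTix'
        have hnjixz : ¬ V.tle (j (i x')) z := by
          intro h
          have h2 : V.tle (j (i x')) (V.meet z (j y'')) :=
            V.le_meet _ _ _ h (mor_tle hjmor hix'y'')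
          rw [← hmV, ← hjm2, ← heqm] at h2
          have h3 : T.tle (i x') mT := mor_tle_reflect hjmor hjinj h2
          exact hnixy (T.tle_lin _ _ (T.tle_trans _ _ _ h3 hmTy))
        have hnzjix : ¬ V.tle z (j (i x')) := fun h =>
          hnjixz (by rw [hz _ h]; exact V.tle_refl _)
        have hp1 : linLt V z (j (i x')) := by
          refine ⟨(coh V (mor_tle hjmor hix'y'') hnzjix hnjixz).mp hzjy''.1, ?_⟩
          intro h
          exact hnzjix (by rw [h]; exact V.tle_refl _)
        have hp2 : V.meet (j (i x)) (j (i x')) = V.meet z (j (i x')) := by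
          rw [e2]
          refine (V.tle_antisymm _ _ ?_ ?_).symm
          · have hP1 : V.tle (V.meet z (j (i x'))) (V.meet z (j y'')) :=
              V.le_meet _ _ _ (V.meet_le_left _ _)
                (V.tle_trans _ _ _ (V.meet_le_right _ _) (mor_tle hjmor hix'y''))
            rw [← hmV, ← hjm2, ← heqm] at hP1
            exact hP1
          · exact V.le_meet _ _ _ hjmTz hjmTjix'
        have hp3 : ∀ u, V.Leaf u → linLt V u (j (i x')) →
            V.meet (j (i x)) (j (i x')) = V.meet u (j (i x')) → V.lin u z := by
          intro u hu hult hmu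
          have hmu' : V.meet u (j (i x')) = j mT := by rw [← hmu, e2]
          have hjmTu : V.tle (j mT) u := by
            rw [← hmu']; exact V.meet_le_left _ _
          refine hmaxV u hu ⟨?_, ?_⟩ ?_
          · exact V.lin_trans _ _ _ hult.1 (V.tle_lin _ _ (mor_tle hjmor hix'y''))
          · intro h
            have h2 : V.tle (j (i x')) u := by rw [h]; exact mor_tle hjmor hix'y''
            exact hult.2 (V.lin_antisymm _ _ hult.1 (V.tle_lin _ _ h2))
          · rw [← hjm2, ← heqm]
            refine (V.tle_antisymm _ _ ?_ ?_).symm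
            · rcases V.pred_chain (j y'') (V.meet u (j y'')) (j (i x'))
                  (V.meet_le_right _ _) (mor_tle hjmor hix'y'') with h | h
              · have h2 : V.tle (V.meet u (j y'')) (V.meet u (j (i x'))) :=
                  V.le_meet _ _ _ (V.meet_le_left _ _) h
                rw [hmu'] at h2
                exact h2
              · exfalso
                have h2 : V.tle (j (i x')) u := V.tle_trans _ _ _ h (V.meet_le_left _ _)
                exact hult.2 (V.lin_antisymm _ _ hult.1 (V.tle_lin _ _ h2))
            · exact V.le_meet _ _ _ hjmTu (by rw [heqm]; exact mor_tle hjmor hm2y'')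
        exact Or.inr ⟨x', hx', hxx', hnextS, hp1, hp2, hp3⟩
      · -- CASE II : `y'' < i x'`.
        have hII : linLt T y'' (i x') := by
          refine ⟨(T.lin_total (i x') y'').resolve_left hc, ?_⟩
          intro h
          exact hc (by rw [← h]; exact T.lin_refl y'')
        have hf1 : T.tle mT m2 := by
          by_cases hh : T.tle mT y''
          · exact T.le_meet _ _ _ hmTy hh
          · exfalso
            have hny''mT : ¬ T.tle y'' mT := fun h2 =>
              hyy''.2 (T.lin_antisymm _ _ hyy''.1
                (T.tle_lin _ _ (T.tle_trans _ _ _ h2 hmTy)))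
            have c1 := coh T hmTy hny''mT hh
            have c2 := coh T hmTix' hny''mT hh
            exact hyy''.2 (T.lin_antisymm _ _ hyy''.1 (c1.mpr (c2.mp hII.1)))
        set q := T.meet y'' (i x') with hqdef
        have hqy'' : T.tle q y'' := T.meet_le_left _ _
        have hqix' : T.tle q (i x') := T.meet_le_right _ _
        have hmTq : T.tle mT q :=
          T.le_meet _ _ _ (T.tle_trans _ _ _ hf1 hm2y'') hmTix'
        have hqmT : ¬ q = mT := by
          intro h
          have h2 : T.lin y'' y := hmaxT y'' hy'' hII (hmT.trans (by rw [← hqdef, h]))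
          exact hyy''.2 (T.lin_antisymm _ _ hyy''.1 h2)
        have hm2q : T.tle m2 q := by
          rcases T.pred_chain y'' q m2 hqy'' hm2y'' with h | h
          · exact absurd
              (T.tle_antisymm _ _ (T.le_meet _ _ _ (T.tle_trans _ _ _ h hm2y) hqix') hmTq)
              hqmT
          · exact h
        have heqm : mT = m2 :=
          T.tle_antisymm _ _ hf1 (T.le_meet _ _ _ hm2y (T.tle_trans _ _ _ hm2q hqix'))
        have hjmTz : V.tle (j mT) z := by rw [heqm]; exact hjm2z
        have hjmTjix' : V.tle (j mT) (j (i x')) := mor_tle hjmor hmTix'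
        have hp1 : linLt V z (j (i x')) := by
          have hstep : V.lin (j y'') (j (i x')) := hjmor.2.1 _ _ hII.1
          refine ⟨V.lin_trans _ _ _ hzjy''.1 hstep, ?_⟩
          intro h
          exact hzjy''.2 (V.lin_antisymm _ _ hzjy''.1 (by rw [h]; exact hstep))
        have hmeetz : V.meet z (j (i x')) = j mT := by
          refine V.tle_antisymm _ _ ?_ (V.le_meet _ _ _ hjmTz hjmTjix')
          rcases V.pred_chain z (V.meet z (j (i x'))) (j mT)
              (V.meet_le_left _ _) hjmTz with h | h
          · exact h
          · by_cases hPy : V.tle (V.meet z (j (i x'))) (j y'')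
            · have h2 : V.tle (V.meet z (j (i x'))) (V.meet z (j y'')) :=
                V.le_meet _ _ _ (V.meet_le_left _ _) hPy
              rw [← hmV, ← hjm2, ← heqm] at h2
              exact h2
            · exfalso
              have hny''P : ¬ V.tle (j y'') (V.meet z (j (i x'))) := fun h2 =>
                hzjy''.2 (V.lin_antisymm _ _ hzjy''.1
                  (V.tle_lin _ _ (V.tle_trans _ _ _ h2 (V.meet_le_left _ _))))
              have c1 := coh V (V.meet_le_left z (j (i x'))) hny''P hPy
              have c2 := coh V (V.meet_le_right z (j (i x'))) hny''P hPy
              exact hzjy''.2 (V.lin_antisymm _ _ hzjy''.1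
                (c1.mpr (c2.mp (hjmor.2.1 _ _ hII.1))))
        have hp2 : V.meet (j (i x)) (j (i x')) = V.meet z (j (i x')) := by
          rw [e2, hmeetz]
        have hp3 : ∀ u, V.Leaf u → linLt V u (j (i x')) →
            V.meet (j (i x)) (j (i x')) = V.meet u (j (i x')) → V.lin u z := by
          intro u hu hult hmu
          have hmu' : V.meet u (j (i x')) = j mT := by rw [← hmu, e2]
          have hjmTu : V.tle (j mT) u := by
            rw [← hmu']; exact V.meet_le_left _ _
          have hnjqu : ¬ V.tle (j q) u := by
            intro h
            have h2 : V.tle (j q) (V.meet u (j (i x'))) :=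
              V.le_meet _ _ _ h (mor_tle hjmor hqix')
            rw [hmu'] at h2
            exact hqmT (T.tle_antisymm _ _ (mor_tle_reflect hjmor hjinj h2) hmTq)
          have hnujq : ¬ V.tle u (j q) := fun h =>
            hnjqu (by rw [hu _ h]; exact V.tle_refl _)
          have hlinujy'' : linLt V u (j y'') := by
            have c1 := coh V (mor_tle hjmor hqy'') hnujq hnjqu
            have c2 := coh V (mor_tle hjmor hqix') hnujq hnjqu
            refine ⟨c1.mpr (c2.mp hult.1), ?_⟩
            intro h
            exact hnjqu (by rw [h]; exact mor_tle hjmor hqy'')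
          refine hmaxV u hu hlinujy'' ?_
          rw [← hjm2, ← heqm]
          refine (V.tle_antisymm _ _ ?_ ?_).symm
          · rcases V.pred_chain (j y'') (V.meet u (j y'')) (j q)
                (V.meet_le_right _ _) (mor_tle hjmor hqy'') with h | h
            · have h2 : V.tle (V.meet u (j y'')) (V.meet u (j (i x'))) :=
                V.le_meet _ _ _ (V.meet_le_left _ _)
                  (V.tle_trans _ _ _ h (mor_tle hjmor hqix'))
              rw [hmu'] at h2
              exact h2
            · exact absurd (V.tle_trans _ _ _ h (V.meet_le_left _ _)) hnjqu
          · exact V.le_meet _ _ _ hjmTu (by rw [heqm]; exact mor_tle hjmor hm2y'')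
        exact Or.inr ⟨x', hx', hxx', hnextS, hp1, hp2, hp3⟩
end

section
/- Let S be an ordered forest and I a finite linear order, n = ht(S). Then S ⊗ I = {(s,t) ∈ S × I^{≤n} : ht(s) = |t|}, with the relation (s₁,t₁) ⊑ (s₂,t₂) iff s₁ ⊑_S s₂, t₁↾(ht(s₁)−1) = t₂↾(ht(s₁)−1), and t₁(ht(s₁)−1) ≤_I t₂(ht(s₁)−1), is a forest (predecessor sets are chains); and the order comparing the interleaved sequences (s(0),t(0),…,s(h−1),t(h−1)) lexicographically makes S ⊗ I an ordered forest. -/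
/-- An ordered forest: a finite poset (`tle`, the forest order `⊑`) with linearly
ordered predecessor sets, together with a linear order `lin` (the lexicographic
order `≤`) extending the forest order and coherent with the forest structure. -/
structure OForest (α : Type) [Finite α] where
  tle : α → α → Prop
  tle_refl : ∀ v, tle v v
  tle_trans : ∀ u v w, tle u v → tle v w → tle u w
  tle_antisymm : ∀ v w, tle v w → tle w v → v = w
  pred_chain : ∀ v x y, tle x v → tle y v → tle x y ∨ tle y x
  lin : α → α → Prop
  lin_refl : ∀ v, lin v v
  lin_trans : ∀ u v w, lin u v → lin v w → lin u w
  lin_antisymm : ∀ v w, lin v w → lin w v → v = w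
  lin_total : ∀ v w, lin v w ∨ lin w v
  tle_lin : ∀ v w, tle v w → lin v w
  lex_coh : ∀ v w v' w', tle v v' → tle w w' → ¬ tle v w → ¬ tle w v → (lin v' w' ↔ lin v w)

variable {α : Type} [Finite α]

/-- The height `ht(s)`: the number of `⊑`-predecessors of `s` (including `s`). -/
noncomputable def htF (S : OForest α) (s : α) : ℕ := Nat.card {x // S.tle x s}

/-- The carrier of `S ⊗ I`: pairs `(s, t)` with `t` a sequence from `I` of length `ht(s)`. -/
def TCar (S : OForest α) (I : Type) : Type := Σ s : α, Fin (htF S s) → I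

instance {S : OForest α} {I : Type} [Finite I] : Finite (TCar S I) := by
  unfold TCar; infer_instance

/-- The forest relation on `S ⊗ I`. -/
def tensorTle (S : OForest α) {I : Type} [LinearOrder I] (p q : TCar S I) : Prop :=
  S.tle p.1 q.1 ∧
  (∀ (k : Fin (htF S p.1)) (k' : Fin (htF S q.1)),
    (k : ℕ) = (k' : ℕ) → (k : ℕ) < htF S p.1 - 1 → p.2 k = q.2 k') ∧
  (∀ (k : Fin (htF S p.1)) (k' : Fin (htF S q.1)),
    (k : ℕ) = htF S p.1 - 1 → (k' : ℕ) = htF S p.1 - 1 → p.2 k ≤ q.2 k')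

/-- The strict comparison used to compare interleaved sequences letterwise. -/
def sumRel (S : OForest α) (I : Type) [LinearOrder I] : (α ⊕ I) → (α ⊕ I) → Prop
  | Sum.inl a, Sum.inl b => S.lin a b ∧ a ≠ b
  | Sum.inr a, Sum.inr b => a < b
  | _, _ => False

/-- The interleaved sequence `(s(0), t(0), …, s(h-1), t(h-1))` of `(s, t) ∈ S ⊗ I`,
where `pred s i` is the predecessor `s(i)` of `s` of height `i + 1`. -/
noncomputable def interleave (S : OForest α) {I : Type} (pred : α → ℕ → α)
    (p : TCar S I) : List (α ⊕ I) :=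
  (List.finRange (htF S p.1)).flatMap fun k => [Sum.inl (pred p.1 k.1), Sum.inr (p.2 k)]

/-- The lexicographic order on `S ⊗ I`. -/
noncomputable def tensorLin (S : OForest α) {I : Type} [LinearOrder I]
    (pred : α → ℕ → α) (p q : TCar S I) : Prop :=
  p = q ∨ List.Lex (sumRel S I) (interleave S pred p) (interleave S pred q)

/-! Encode `(s, t) ∈ S ⊗ I` by the word `[(s(0), t(0)), …, (s(h-1), t(h-1))]` over the alphabet
`α × I`, ordered as a forest by `(a, i) ≤ (b, j) ↔ a = b ∧ i ≤ j` and linearly lexicographically.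
Under this encoding `⊑` becomes "prefix up to raising the last letter", and the comparison of
interleaved sequences becomes the lexicographic order of words. Each axiom of an ordered forest
then passes from the letters to the words by induction on words; the encoding is injective
because `s(h-1) = s`. -/

/-- The axioms of `OForest` for a forest order `R` and the strict part `r` of a linear order,
without finiteness. -/
structure IsStrictOrderedForest {σ : Type*} (R r : σ → σ → Prop) : Prop where
  le_refl : ∀ a, R a a
  le_trans : ∀ a b c, R a b → R b c → R a c
  le_antisymm : ∀ a b, R a b → R b a → a = b
  le_chain : ∀ a b c, R a c → R b c → R a b ∨ R b a
  lt_trans : ∀ a b c, r a b → r b c → r a c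
  lt_asymm : ∀ a b, r a b → ¬ r b a
  lt_trichotomous : ∀ a b, r a b ∨ a = b ∨ r b a
  lt_of_le_of_ne : ∀ a b, R a b → a ≠ b → r a b
  lt_of_incomparable : ∀ {a b a' b'}, R a a' → R b b' → ¬ R a b → ¬ R b a → r a b → r a' b'

namespace IsStrictOrderedForest

variable {σ : Type*} {R r : σ → σ → Prop}

theorem lt_of_lt_of_le_right (hσ : IsStrictOrderedForest R r) {a b b' : σ} (hab : r a b)
    (hbb' : R b b') (hba : ¬ R b a) : r a b' := by
  by_cases h : R a b
  · exact hσ.lt_of_le_of_ne a b' (hσ.le_trans a b b' h hbb') (by rintro rfl; exact hba hbb')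
  · exact hσ.lt_of_incomparable (hσ.le_refl a) hbb' h hba hab

theorem lt_of_lt_of_le_left (hσ : IsStrictOrderedForest R r) {a a' b : σ} (hab : r a b)
    (haa' : R a a') (hab' : ¬ R a b) : r a' b := by
  have hba : ¬ R b a := fun h => by
    rcases eq_or_ne b a with rfl | hne
    · exact hab' h
    · exact hσ.lt_asymm a b hab (hσ.lt_of_le_of_ne b a h hne)
  exact hσ.lt_of_incomparable haa' (hσ.le_refl b) hab' hba hab

theorem lex_trichotomous (hσ : IsStrictOrderedForest R r) (l₁ l₂ : List σ) :
    List.Lex r l₁ l₂ ∨ l₁ = l₂ ∨ List.Lex r l₂ l₁ :=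
  have : Std.Trichotomous r := Std.trichotomous_of_rel_or_eq_or_rel_swap (hσ.lt_trichotomous _ _)
  trichotomous_of _ l₁ l₂

end IsStrictOrderedForest

namespace List

variable {σ : Type*} {R r : σ → σ → Prop}

inductive IsPrefixUpToLast (R : σ → σ → Prop) : List σ → List σ → Prop
  | singleton {a b : σ} (l : List σ) : R a b → IsPrefixUpToLast R [a] (b :: l)
  | cons (a : σ) {l₁ l₂ : List σ} : IsPrefixUpToLast R l₁ l₂ →
      IsPrefixUpToLast R (a :: l₁) (a :: l₂)

namespace IsPrefixUpToLast

theorem not_nil_right {l : List σ} : ¬ IsPrefixUpToLast R l [] := nofun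

theorem not_nil_left {l : List σ} : ¬ IsPrefixUpToLast R [] l := nofun

theorem ne_nil_left {l₁ l₂ : List σ} (h : IsPrefixUpToLast R l₁ l₂) : l₁ ≠ [] := by
  rintro rfl; exact not_nil_left h

theorem refl (hR : ∀ a, R a a) : ∀ {l : List σ}, l ≠ [] → IsPrefixUpToLast R l l
  | [a], _ => singleton [] (hR a)
  | a :: b :: l, _ => cons a (refl hR (cons_ne_nil b l))

theorem trans (hR : ∀ a b c, R a b → R b c → R a c) {l₁ l₂ l₃ : List σ}
    (h₁₂ : IsPrefixUpToLast R l₁ l₂) (h₂₃ : IsPrefixUpToLast R l₂ l₃) :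
    IsPrefixUpToLast R l₁ l₃ := by
  induction h₁₂ generalizing l₃ with
  | singleton l hab =>
    cases h₂₃ with
    | singleton _ hbc => exact singleton _ (hR _ _ _ hab hbc)
    | cons _ _ => exact singleton _ hab
  | cons a h ih =>
    cases h₂₃ with
    | singleton _ _ => exact absurd h not_nil_right
    | cons _ h' => exact cons a (ih h')

theorem antisymm (hR : ∀ a b, R a b → R b a → a = b) {l₁ l₂ : List σ}
    (h₁₂ : IsPrefixUpToLast R l₁ l₂) (h₂₁ : IsPrefixUpToLast R l₂ l₁) : l₁ = l₂ := by
  induction h₁₂ with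
  | singleton l hab =>
    cases h₂₁ with
    | singleton _ hba => rw [hR _ _ hab hba]
    | cons _ h => exact absurd h not_nil_right
  | cons a h ih =>
    cases h₂₁ with
    | singleton _ _ => exact absurd h not_nil_right
    | cons _ h' => rw [ih h']

theorem total_of_common_extension (hR : ∀ a b c, R a c → R b c → R a b ∨ R b a)
    {l₁ l₂ l : List σ} (h₁ : IsPrefixUpToLast R l₁ l) (h₂ : IsPrefixUpToLast R l₂ l) :
    IsPrefixUpToLast R l₁ l₂ ∨ IsPrefixUpToLast R l₂ l₁ := by
  induction h₁ generalizing l₂ with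
  | singleton l hac =>
    cases h₂ with
    | singleton _ hbc => exact (hR _ _ _ hac hbc).imp (singleton []) (singleton [])
    | cons _ _ => exact Or.inl (singleton _ hac)
  | cons a _ ih =>
    cases h₂ with
    | singleton _ hbc => exact Or.inr (singleton _ hbc)
    | cons _ h' => exact (ih h').imp (cons a) (cons a)

theorem eq_or_lex (hRr : ∀ a b, R a b → a ≠ b → r a b) {l₁ l₂ : List σ}
    (h : IsPrefixUpToLast R l₁ l₂) : l₁ = l₂ ∨ Lex r l₁ l₂ := by
  induction h with
  | @singleton a b l hab =>
    by_cases hne : a = b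
    · subst hne
      cases l with
      | nil => exact Or.inl rfl
      | cons c l => exact Or.inr (Lex.cons Lex.nil)
    · exact Or.inr (Lex.rel (hRr a b hab hne))
  | cons a _ ih => exact ih.imp (congrArg (a :: ·)) Lex.cons

theorem lex_of_incomparable (hσ : IsStrictOrderedForest R r) {l₁ l₂ l₁' l₂' : List σ}
    (h₁ : IsPrefixUpToLast R l₁ l₁') (h₂ : IsPrefixUpToLast R l₂ l₂')
    (h₁₂ : ¬ IsPrefixUpToLast R l₁ l₂) (h₂₁ : ¬ IsPrefixUpToLast R l₂ l₁)
    (hlex : Lex r l₁ l₂) : Lex r l₁' l₂' := by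
  induction hlex generalizing l₁' l₂' with
  | nil => exact absurd h₁ not_nil_left
  | @cons a t₁ t₂ hlex ih =>
    cases h₁ with
    | singleton _ _ => cases t₂ with
      | nil => exact absurd hlex not_lex_nil
      | cons b t => exact absurd (singleton _ (hσ.le_refl a)) h₁₂
    | cons _ h₁ =>
      cases h₂ with
      | singleton _ _ => exact absurd hlex not_lex_nil
      | cons _ h₂ => exact Lex.cons (ih h₁ h₂ (mt (cons a) h₁₂) (mt (cons a) h₂₁))
  | @rel a t₁ b t₂ hab =>
    cases h₁ with
    | singleton _ haa' =>
      have hnab : ¬ R a b := fun h => h₁₂ (singleton t₂ h)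
      cases h₂ with
      | singleton _ hbb' =>
        exact Lex.rel (hσ.lt_of_incomparable haa' hbb' hnab (fun h => h₂₁ (singleton [] h)) hab)
      | cons _ _ => exact Lex.rel (hσ.lt_of_lt_of_le_left hab haa' hnab)
    | cons _ _ =>
      cases h₂ with
      | singleton _ hbb' =>
        exact Lex.rel (hσ.lt_of_lt_of_le_right hab hbb' (fun h => h₂₁ (singleton t₁ h)))
      | cons _ _ => exact Lex.rel hab

theorem lex_iff_of_incomparable (hσ : IsStrictOrderedForest R r) {l₁ l₂ l₁' l₂' : List σ}
    (h₁ : IsPrefixUpToLast R l₁ l₁') (h₂ : IsPrefixUpToLast R l₂ l₂')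
    (h₁₂ : ¬ IsPrefixUpToLast R l₁ l₂) (h₂₁ : ¬ IsPrefixUpToLast R l₂ l₁) :
    Lex r l₁' l₂' ↔ Lex r l₁ l₂ := by
  refine ⟨fun h' => ?_, lex_of_incomparable hσ h₁ h₂ h₁₂ h₂₁⟩
  rcases hσ.lex_trichotomous l₁ l₂ with h | rfl | h
  · exact h
  · exact absurd (refl hσ.le_refl (ne_nil_left h₁)) h₁₂
  · exact absurd h' (lex_asymm (hσ.lt_asymm _ _) (lex_of_incomparable hσ h₂ h₁ h₂₁ h₁₂ h))


end IsPrefixUpToLast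

theorem isPrefixUpToLast_iff_getElem {l₁ l₂ : List σ} :
    IsPrefixUpToLast R l₁ l₂ ↔ ∃ n, ∃ (h₁ : l₁.length = n + 1) (h₂ : n < l₂.length),
      (∀ i (hi : i < n), l₁[i] = l₂[i]) ∧ R l₁[n] l₂[n] := by
  constructor
  · intro h
    induction h with
    | singleton l hab => exact ⟨0, rfl, by simp, fun i hi => absurd hi (Nat.not_lt_zero i), hab⟩
    | cons a _ ih =>
      obtain ⟨n, h₁, h₂, hag, hR⟩ := ih
      refine ⟨n + 1, by simp [h₁], by simpa using h₂, fun i hi => ?_, by simpa using hR⟩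
      cases i with
      | zero => rfl
      | succ i => simpa using hag i (by omega)
  · rintro ⟨n, h₁, h₂, hag, hR⟩
    induction l₁ generalizing l₂ n with
    | nil => simp at h₁
    | cons a t ih =>
      cases l₂ with
      | nil => simp at h₂
      | cons b l =>
        cases n with
        | zero =>
          obtain rfl : t = [] := by simpa using h₁
          exact IsPrefixUpToLast.singleton l hR
        | succ n =>
          obtain rfl : a = b := hag 0 (Nat.succ_pos n)
          exact IsPrefixUpToLast.cons a (ih n (by simpa using h₁) (by simpa using h₂)
            (fun i hi => hag (i + 1) (by omega)) hR)

theorem lex_flatMap_sum_iff {β γ : Type*} {r₁ : β → β → Prop} {r₂ : γ → γ → Prop} :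
    ∀ l₁ l₂ : List (β × γ),
      Lex (Sum.LiftRel r₁ r₂) (l₁.flatMap fun x => [.inl x.1, .inr x.2])
        (l₂.flatMap fun x => [.inl x.1, .inr x.2]) ↔ Lex (Prod.Lex r₁ r₂) l₁ l₂
  | [], [] => by simp
  | [], _ :: _ => by simp
  | _ :: _, [] => by simp
  | x :: l₁, y :: l₂ => by
    simp only [flatMap_cons, cons_append, nil_append, cons_lex_cons_iff, Prod.lex_def,
      Sum.liftRel_inl_inl, Sum.liftRel_inr_inr, Sum.inl.injEq, Sum.inr.injEq,
      lex_flatMap_sum_iff l₁ l₂, Prod.ext_iff]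
    tauto

end List

namespace OForest

variable {β : Type} {σ : Type*} [Finite β] {R r : σ → σ → Prop}

def ofWords (f : β → List σ) (hf : Function.Injective f) (hne : ∀ x, f x ≠ [])
    (hσ : IsStrictOrderedForest R r) : OForest β where
  tle x y := List.IsPrefixUpToLast R (f x) (f y)
  tle_refl x := .refl hσ.le_refl (hne x)
  tle_trans _ _ _ := .trans hσ.le_trans
  tle_antisymm _ _ h₁ h₂ := hf (h₁.antisymm hσ.le_antisymm h₂)
  pred_chain _ _ _ := List.IsPrefixUpToLast.total_of_common_extension hσ.le_chain
  lin x y := x = y ∨ List.Lex r (f x) (f y)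
  lin_refl _ := Or.inl rfl
  lin_trans := by
    rintro x y z (rfl | hxy) (rfl | hyz)
    exacts [Or.inl rfl, Or.inr hyz, Or.inr hxy,
      Or.inr (List.lex_trans (hσ.lt_trans _ _ _) hxy hyz)]
  lin_antisymm := by
    rintro x y (rfl | hxy) (h | hyx)
    exacts [rfl, rfl, h.symm, absurd hyx (List.lex_asymm (hσ.lt_asymm _ _) hxy)]
  lin_total x y := by
    rcases hσ.lex_trichotomous (f x) (f y) with h | h | h
    exacts [Or.inl (Or.inr h), Or.inl (Or.inl (hf h)), Or.inr (Or.inr h)]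
  tle_lin _ _ h := (h.eq_or_lex hσ.lt_of_le_of_ne).imp_left (fun h => hf h)
  lex_coh v w v' w' hv hw hvw hwv := by
    have hvw' : v' ≠ w' := by
      rintro rfl
      exact (List.IsPrefixUpToLast.total_of_common_extension hσ.le_chain hv hw).elim hvw hwv
    have hne : v ≠ w := by rintro rfl; exact hvw (.refl hσ.le_refl (hne v))
    simp only [hvw', hne, false_or]
    exact List.IsPrefixUpToLast.lex_iff_of_incomparable hσ hv hw hvw hwv

end OForest

theorem htF_eq_ncard (S : OForest α) (s : α) : htF S s = {x | S.tle x s}.ncard :=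
  Nat.card_coe_set_eq _

theorem htF_pos (S : OForest α) (s : α) : 0 < htF S s :=
  have : Nonempty {x // S.tle x s} := ⟨⟨s, S.tle_refl s⟩⟩
  Nat.card_pos

theorem htF_le_htF (S : OForest α) {a b : α} (h : S.tle a b) : htF S a ≤ htF S b := by
  rw [htF_eq_ncard, htF_eq_ncard]
  exact Set.ncard_le_ncard (fun x hx => S.tle_trans x a b hx h)

theorem eq_of_tle_of_htF_eq (S : OForest α) {a b : α} (h : S.tle a b)
    (he : htF S a = htF S b) : a = b := by
  rw [htF_eq_ncard, htF_eq_ncard] at he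
  have hset := Set.eq_of_subset_of_ncard_le (fun x hx => S.tle_trans x a b hx h) he.ge
  have hb : b ∈ {x | S.tle x a} := hset ▸ S.tle_refl b
  exact S.tle_antisymm a b h hb

theorem eq_of_tle_of_tle_of_htF_eq (S : OForest α) {a x y : α} (hx : S.tle x a)
    (hy : S.tle y a) (he : htF S x = htF S y) : x = y :=
  (S.pred_chain a x y hx hy).elim (eq_of_tle_of_htF_eq S · he)
    (fun h => (eq_of_tle_of_htF_eq S h he.symm).symm)

theorem OForest.isStrictTotalOrder_lin (S : OForest α) :
    IsStrictTotalOrder α (fun a b => S.lin a b ∧ a ≠ b) where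
  trichotomous a b hab hba := by
    by_contra hne
    exact (S.lin_total a b).elim (fun h => hab ⟨h, hne⟩) (fun h => hba ⟨h, Ne.symm hne⟩)
  irrefl a h := h.2 rfl
  trans a b c hab hbc := ⟨S.lin_trans a b c hab.1 hbc.1, by
    rintro rfl; exact hab.2 (S.lin_antisymm a b hab.1 hbc.1)⟩

theorem OForest.isStrictOrderedForest_prod (S : OForest α) (I : Type) [LinearOrder I] :
    IsStrictOrderedForest (fun x y : α × I => x.1 = y.1 ∧ x.2 ≤ y.2)
      (Prod.Lex (fun a b => S.lin a b ∧ a ≠ b) (· < ·)) := by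
  have := S.isStrictTotalOrder_lin
  refine ⟨fun a => ⟨rfl, le_rfl⟩, fun a b c hab hbc => ⟨hab.1.trans hbc.1, hab.2.trans hbc.2⟩,
    fun a b hab hba => Prod.ext hab.1 (le_antisymm hab.2 hba.2), fun a b c hac hbc => ?_,
    fun a b c => Prod.Lex.trans, fun a b hab hba => irrefl a (Prod.Lex.trans hab hba),
    trichotomous_of _, fun a b hab hne => ?_, fun {a b a' b'} haa' hbb' hab hba h => ?_⟩
  · exact (le_total a.2 b.2).imp (⟨hac.1.trans hbc.1.symm, ·⟩) (⟨hbc.1.trans hac.1.symm, ·⟩)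
  · exact Prod.lex_def.2 (Or.inr ⟨hab.1, lt_of_le_of_ne hab.2 fun h => hne (Prod.ext hab.1 h)⟩)
  · have h₁ : a.1 ≠ b.1 := fun h₁ =>
      (le_total a.2 b.2).elim (fun h₂ => hab ⟨h₁, h₂⟩) (fun h₂ => hba ⟨h₁.symm, h₂⟩)
    rw [Prod.lex_def] at h ⊢
    rw [← haa'.1, ← hbb'.1]
    exact Or.inl (h.resolve_right fun h' => h₁ h'.1)

theorem sumRel_eq (S : OForest α) (I : Type) [LinearOrder I] :
    sumRel S I = Sum.LiftRel (fun a b => S.lin a b ∧ a ≠ b) (· < ·) := by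
  ext (a | a) (b | b) <;> simp [sumRel]

section TensorProduct

variable {S : OForest α} {I : Type} {pred : α → ℕ → α}

theorem pred_eq_pred_of_tle
    (hpred : ∀ s k, k < htF S s → S.tle (pred s k) s ∧ htF S (pred s k) = k + 1)
    {a b : α} (h : S.tle a b) {k : ℕ} (hk : k < htF S a) : pred b k = pred a k :=
  have hkb := hk.trans_le (htF_le_htF S h)
  eq_of_tle_of_tle_of_htF_eq S (hpred b k hkb).1 (S.tle_trans _ _ _ (hpred a k hk).1 h)
    ((hpred b k hkb).2.trans (hpred a k hk).2.symm)

variable (S pred) in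
noncomputable def labelledPath (p : TCar S I) : List (α × I) :=
  List.ofFn fun k : Fin (htF S p.1) => (pred p.1 k, p.2 k)

theorem interleave_eq_flatMap (p : TCar S I) :
    interleave S pred p = (labelledPath S pred p).flatMap fun x => [.inl x.1, .inr x.2] := by
  simp [interleave, labelledPath, List.ofFn_eq_map, List.flatMap_map]

theorem labelledPath_injective (hpred_self : ∀ s, pred s (htF S s - 1) = s) :
    Function.Injective (labelledPath S pred (I := I)) := by
  rintro ⟨s, t⟩ ⟨s', t'⟩ h
  have hlen := congrArg List.length h
  simp only [labelledPath, List.length_ofFn] at hlen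
  have hs : s = s' := by
    have hlast := congrArg Prod.fst (List.getElem_of_eq h
      (show htF S s - 1 < (labelledPath S pred ⟨s, t⟩).length by simp [labelledPath, htF_pos]))
    simp only [labelledPath, List.getElem_ofFn] at hlast
    rwa [hpred_self, hlen, hpred_self] at hlast
  subst hs
  simp only [labelledPath, List.ofFn_injective.eq_iff] at h
  exact Sigma.ext rfl (heq_of_eq (funext fun k => congrArg Prod.snd (congrFun h k)))

theorem tensorTle_iff [LinearOrder I]
    (hpred : ∀ s k, k < htF S s → S.tle (pred s k) s ∧ htF S (pred s k) = k + 1)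
    (hpred_self : ∀ s, pred s (htF S s - 1) = s) (p q : TCar S I) :
    tensorTle S p q ↔ List.IsPrefixUpToLast (fun x y => x.1 = y.1 ∧ x.2 ≤ y.2)
      (labelledPath S pred p) (labelledPath S pred q) := by
  rw [List.isPrefixUpToLast_iff_getElem]
  simp only [labelledPath, List.length_ofFn, List.getElem_ofFn, Prod.mk.injEq]
  have hpos := htF_pos S p.1
  constructor
  · rintro ⟨hpq, hinit, hlast⟩
    have hle := htF_le_htF S hpq
    refine ⟨htF S p.1 - 1, by omega, by omega, fun i hi => ⟨?_, ?_⟩, ?_, hlast _ _ rfl rfl⟩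
    · exact (pred_eq_pred_of_tle hpred hpq (by omega)).symm
    · exact hinit _ _ rfl (by simpa using hi)
    · exact (pred_eq_pred_of_tle hpred hpq (by omega)).symm
  · rintro ⟨n, hn, hnq, hinit, hpn, hlast⟩
    have hpq : S.tle p.1 q.1 := by
      rw [← hpred_self p.1, hn, Nat.add_sub_cancel, hpn]
      exact (hpred q.1 n hnq).1
    refine ⟨hpq, fun k k' hkk' hk => ?_, fun k k' hk hk' => ?_⟩
    · obtain ⟨k, _⟩ := k
      obtain ⟨k', _⟩ := k'
      obtain rfl : k = k' := hkk'
      change k < _ at hk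
      exact (hinit k (by omega)).2
    · obtain ⟨k, _⟩ := k
      obtain ⟨k', _⟩ := k'
      obtain rfl : k = n := by change k = _ at hk; omega
      obtain rfl : k' = k := by change k' = _ at hk'; omega
      exact hlast

theorem tensorLin_iff [LinearOrder I] (p q : TCar S I) :
    tensorLin S pred p q ↔
      p = q ∨ List.Lex (Prod.Lex (fun a b => S.lin a b ∧ a ≠ b) (· < ·))
        (labelledPath S pred p) (labelledPath S pred q) := by
  rw [tensorLin, interleave_eq_flatMap, interleave_eq_flatMap, sumRel_eq,
    List.lex_flatMap_sum_iff]

end TensorProduct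

/-- `S ⊗ I` with the relation `(s₁,t₁) ⊑ (s₂,t₂)` iff `s₁ ⊑_S s₂`,
`t₁ ↾ (ht(s₁)−1) = t₂ ↾ (ht(s₁)−1)` and `t₁(ht(s₁)−1) ≤_I t₂(ht(s₁)−1)`, and with
the lexicographic comparison of interleaved sequences, is an ordered forest. -/
theorem stmt14 (I : Type) [Finite I] [LinearOrder I] (S : OForest α)
    (pred : α → ℕ → α)
    (hpred : ∀ s k, k < htF S s → S.tle (pred s k) s ∧ htF S (pred s k) = k + 1)
    (hpred_self : ∀ s, pred s (htF S s - 1) = s) :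
    ∃ F : OForest (TCar S I),
      (∀ p q, F.tle p q ↔ tensorTle S p q) ∧
      (∀ p q, F.lin p q ↔ tensorLin S pred p q) :=
  ⟨.ofWords (labelledPath S pred) (labelledPath_injective hpred_self)
      (fun p => by simpa [labelledPath] using (htF_pos S p.1).ne') (S.isStrictOrderedForest_prod I),
    fun p q => (tensorTle_iff hpred hpred_self p q).symm, fun p q => (tensorLin_iff p q).symm⟩
end

section
/- Let A, Q be linear orders with A nonempty, and I a linear order. Let p : A ⊕ (Q × I) → A ⊕ Q satisfy: p↾A = id_A and for each x ∈ Q, x ∈ p[{x} × I] ⊆ A ∪ {x} (where Q × I has the lexicographic order and is placed on top of A). Then p is a rigid surjection of linear orders (viewed as ordered trees where the tree order equals the linear order). -/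
/-- Functions with property (⁎): `p : A ⊕ (Q × I) → A ⊕ Q` (lexicographic sums
and products, `Q × I` placed on top of `A`) with `p ↾ A = id_A` and
`x ∈ p[{x} × I] ⊆ A ∪ {x}` for each `x ∈ Q`, are rigid surjections of linear
orders: there is a monotone `e : A ⊕ Q → A ⊕ (Q × I)` with `p ∘ e = id` and
`e (p w) ≤ w` for all `w`. -/
theorem stmt15 (A Q I : Type) [LinearOrder A] [LinearOrder Q] [LinearOrder I]
    [Finite A] [Finite Q] [Finite I] [Nonempty A]
    (p : (A ⊕ₗ (Q ×ₗ I)) → (A ⊕ₗ Q))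
    (hA : ∀ a : A, p (toLex (Sum.inl a)) = toLex (Sum.inl a))
    (hQ : ∀ x : Q,
      (∃ i : I, p (toLex (Sum.inr (toLex (x, i)))) = toLex (Sum.inr x)) ∧
      (∀ i : I, p (toLex (Sum.inr (toLex (x, i)))) = toLex (Sum.inr x) ∨
        ∃ a : A, p (toLex (Sum.inr (toLex (x, i)))) = toLex (Sum.inl a))) :
    ∃ e : (A ⊕ₗ Q) → (A ⊕ₗ (Q ×ₗ I)),
      Monotone e ∧ (∀ z, p (e z) = z) ∧ (∀ w, e (p w) ≤ w) := by
  classical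
  haveI : WellFoundedLT I := Finite.to_wellFoundedLT
  have key : ∀ x : Q, ∃ i : I,
      p (toLex (Sum.inr (toLex (x, i)))) = toLex (Sum.inr x) ∧
      ∀ j : I, p (toLex (Sum.inr (toLex (x, j)))) = toLex (Sum.inr x) → i ≤ j := by
    intro x
    obtain ⟨i0, hi0⟩ := (hQ x).1
    obtain ⟨m, hm, hmin⟩ := (wellFounded_lt (α := I)).has_min
      {i | p (toLex (Sum.inr (toLex (x, i)))) = toLex (Sum.inr x)} ⟨i0, hi0⟩
    exact ⟨m, hm, fun j hj => not_lt.1 (hmin j hj)⟩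
  choose f hf1 hf2 using key
  refine ⟨fun z => match ofLex z with
    | Sum.inl a => toLex (Sum.inl a)
    | Sum.inr x => toLex (Sum.inr (toLex (x, f x))), ?_, ?_, ?_⟩
  · intro z w hzw
    rcases z with (a | x) <;> rcases w with (b | y)
    · exact Sum.Lex.inl_le_inl_iff.2 (Sum.Lex.inl_le_inl_iff.1 hzw)
    · exact Sum.Lex.inl_le_inr a _
    · exact absurd hzw Sum.Lex.not_inr_le_inl
    · have hxy : x ≤ y := Sum.Lex.inr_le_inr_iff.1 hzw
      rcases lt_or_eq_of_le hxy with h | h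
      · exact Sum.Lex.le_def.2 (Sum.Lex.inr (Prod.Lex.left _ _ h))
      · subst h; rfl
  · intro z
    rcases z with (a | x)
    · exact hA a
    · exact hf1 x
  · intro w
    rcases w with (a | xi)
    · rw [show (Sum.inl a : A ⊕ₗ (Q ×ₗ I)) = toLex (Sum.inl a) from rfl, hA a]
      exact le_rfl
    · rcases xi with ⟨x, i⟩
      have := (hQ x).2 i
      rcases this with h | ⟨a, h⟩
      · have hle : f x ≤ i := hf2 x i h
        rw [show p (Sum.inr (x, i)) = toLex (Sum.inr x) from h]
        exact Sum.Lex.le_def.2 (Sum.Lex.inr (Prod.Lex.toLex_mono ⟨le_rfl, hle⟩))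
      · rw [show p (Sum.inr (x, i)) = toLex (Sum.inl a) from h]
        exact Sum.Lex.inl_le_inr a _
end

section
/- For linear orders A (nonempty) and J, and x ∈ J, a sealed rigid surjection s : A ⊕ J^x → A ⊕ 1 that is the identity on A is uniquely determined by its restriction to (A ⊕ J)^{x−}, where x− is the immediate predecessor of x in A ⊕ J; conversely, every function r : (A ⊕ J)^{x−} → A with r↾A = id_A extends uniquely to such a sealed A-rigid surjection sending x to the top element of A ⊕ 1. This gives a bijection between sealed A-rigid surjections A ⊕ J^x → A ⊕ 1 and functions (A ⊕ J)^{x−} → A that are identity on A. -/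
/-!
A sealed `A`-rigid surjection is the identity on `A` and sends `x = e ⊤` to `⊤`. Conversely, any
function with these two properties is a sealed rigid surjection, whatever its values at the
points `j < x` of `J`: the section `a ↦ a, ⊤ ↦ x` works, because every such `j` lies above all
of `A`. So these surjections correspond exactly to free choices of values in `A` at the points
of `(A ⊕ J)^{x⁻}` outside `A`.
-/

open Sum

section SealedRigidSurjection

variable {A J : Type*} [LinearOrder J] {x : J}

def sealedExtension (t : {j : J // j < x} → A) (w : A ⊕ₗ {y : J // y ≤ x}) : WithTop A :=
  match ofLex w with
  | inl a => a
  | inr ⟨j, hj⟩ => if h : j = x then ⊤ else t ⟨j, hj.lt_of_ne h⟩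

theorem sealedExtension_inr_of_lt (t : {j : J // j < x} → A) {j : J} (hj : j < x) :
    sealedExtension t (toLex (inr ⟨j, hj.le⟩)) = t ⟨j, hj⟩ :=
  dif_neg hj.ne

theorem sealedExtension_inr_self (t : {j : J // j < x} → A) :
    sealedExtension t (toLex (inr ⟨x, le_rfl⟩)) = ⊤ :=
  dif_pos rfl

variable [LinearOrder A]

variable (x) in
def IsSealedRigidSurj (s : A ⊕ₗ {y : J // y ≤ x} → WithTop A) : Prop :=
  (∀ a : A, s (toLex (inl a)) = (a : WithTop A)) ∧
    ∃ e : WithTop A → A ⊕ₗ {y : J // y ≤ x}, Monotone e ∧ (∀ z, s (e z) = z) ∧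
      (∀ w, e (s w) ≤ w) ∧ e ⊤ = toLex (inr ⟨x, le_rfl⟩)

theorem IsSealedRigidSurj.apply_top {s : A ⊕ₗ {y : J // y ≤ x} → WithTop A}
    (hs : IsSealedRigidSurj x s) : s (toLex (inr ⟨x, le_rfl⟩)) = ⊤ := by
  obtain ⟨-, e, -, hse, -, he⟩ := hs
  rw [← he, hse]

variable (x) in
def sealedSection : WithTop A → A ⊕ₗ {y : J // y ≤ x}
  | ⊤ => toLex (inr ⟨x, le_rfl⟩)
  | (a : A) => toLex (inl a)

theorem monotone_sealedSection : Monotone (sealedSection (A := A) x) :=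
  WithTop.monotone_iff.2
    ⟨fun _ _ h => Lex.inl_le_inl_iff.2 h, fun _ => Lex.inl_le_inr _ _⟩

theorem isSealedRigidSurj_sealedExtension (t : {j : J // j < x} → A) :
    IsSealedRigidSurj x (sealedExtension t) := by
  refine ⟨fun _ => rfl, sealedSection x, monotone_sealedSection, ?_, ?_, rfl⟩
  · rintro (_ | a)
    · exact sealedExtension_inr_self t
    · rfl
  · intro w
    induction w with | h w => ?_
    rcases w with a | ⟨j, hj⟩
    · exact le_rfl
    · obtain rfl | hjx := eq_or_lt_of_le hj
      · rw [sealedExtension_inr_self]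
        rfl
      · rw [sealedExtension_inr_of_lt t hjx]
        exact Lex.inl_le_inr _ _

theorem IsSealedRigidSurj.eq_sealedExtension {s : A ⊕ₗ {y : J // y ≤ x} → WithTop A}
    (hs : IsSealedRigidSurj x s) (t : {j : J // j < x} → A)
    (ht : ∀ j (hj : j < x), s (toLex (inr ⟨j, hj.le⟩)) = t ⟨j, hj⟩) :
    s = sealedExtension t := by
  funext w
  induction w with | h w => ?_
  rcases w with a | ⟨j, hj⟩
  · exact hs.1 a
  · obtain rfl | hjx := eq_or_lt_of_le hj
    · exact hs.apply_top.trans (sealedExtension_inr_self t).symm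
    · rw [ht j hjx, sealedExtension_inr_of_lt t hjx]

end SealedRigidSurjection

theorem stmt16_general (A J : Type) [LinearOrder A] [LinearOrder J]
    (x : J) (xm : A ⊕ₗ J)
    (hxm : xm < toLex (Sum.inr x) ∧ ∀ z, z < toLex (Sum.inr x) → z ≤ xm)
    (ι : {z : A ⊕ₗ J // z ≤ xm} → (A ⊕ₗ {y : J // y ≤ x}))
    (hι1 : ∀ (a : A) (h : toLex (Sum.inl a) ≤ xm),
      ι ⟨toLex (Sum.inl a), h⟩ = toLex (Sum.inl a))
    (hι2 : ∀ (j : J) (h : toLex (Sum.inr j) ≤ xm) (hj : j ≤ x),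
      ι ⟨toLex (Sum.inr j), h⟩ = toLex (Sum.inr ⟨j, hj⟩)) :
    ∀ r : {z : A ⊕ₗ J // z ≤ xm} → A,
      (∀ (a : A) (h : toLex (Sum.inl a) ≤ xm), r ⟨toLex (Sum.inl a), h⟩ = a) →
      ∃! s : (A ⊕ₗ {y : J // y ≤ x}) → WithTop A,
        ((∀ a : A, s (toLex (Sum.inl a)) = (a : WithTop A)) ∧
         (∃ e : WithTop A → (A ⊕ₗ {y : J // y ≤ x}), Monotone e ∧
           (∀ z, s (e z) = z) ∧ (∀ w, e (s w) ≤ w) ∧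
           e ⊤ = toLex (Sum.inr ⟨x, le_refl x⟩))) ∧
        (∀ z, s (ι z) = (r z : WithTop A)) := by
  intro r hr
  have le_xm : ∀ {j : J}, j < x → toLex (inr j : A ⊕ J) ≤ xm := fun hj =>
    hxm.2 _ (Lex.inr_lt_inr_iff.2 hj)
  let t : {j : J // j < x} → A := fun j => r ⟨toLex (inr j.1), le_xm j.2⟩
  refine ⟨sealedExtension t, ⟨isSealedRigidSurj_sealedExtension t, ?_⟩, ?_⟩
  · rintro ⟨z, hz⟩
    induction z with | h z => ?_
    rcases z with a | j
    · rw [hι1 a hz, hr a hz]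
      rfl
    · have hjx : j < x := Lex.inr_lt_inr_iff.1 (hz.trans_lt hxm.1)
      rw [hι2 j hz hjx.le, sealedExtension_inr_of_lt t hjx]
  · rintro s ⟨hs, hsι⟩
    refine IsSealedRigidSurj.eq_sealedExtension hs t fun j hj => ?_
    rw [← hι2 j (le_xm hj) hj.le, hsι]

/-- Sealed `A`-rigid surjections `s : A ⊕ J^x → A ⊕ 1` (here `A ⊕ 1` is `WithTop A`;
sealedness means the witnessing monotone `e` sends the top to the top, i.e. to `x`)
are in bijection with functions `(A ⊕ J)^{x⁻} → A` that are the identity on `A`,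
where `x⁻` is the immediate predecessor of `x` in `A ⊕ J` and `ι` is the canonical
identification of `(A ⊕ J)^{x⁻}` with a subset of `A ⊕ J^x`: every such function `r`
extends uniquely to a sealed `A`-rigid surjection `s` with `s ∘ ι = r`. -/
theorem stmt16 (A J : Type) [LinearOrder A] [LinearOrder J] [Finite A] [Finite J]
    [Nonempty A] (x : J) (xm : A ⊕ₗ J)
    (hxm : xm < toLex (Sum.inr x) ∧ ∀ z, z < toLex (Sum.inr x) → z ≤ xm)
    (ι : {z : A ⊕ₗ J // z ≤ xm} → (A ⊕ₗ {y : J // y ≤ x}))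
    (hι1 : ∀ (a : A) (h : toLex (Sum.inl a) ≤ xm),
      ι ⟨toLex (Sum.inl a), h⟩ = toLex (Sum.inl a))
    (hι2 : ∀ (j : J) (h : toLex (Sum.inr j) ≤ xm) (hj : j ≤ x),
      ι ⟨toLex (Sum.inr j), h⟩ = toLex (Sum.inr ⟨j, hj⟩)) :
    ∀ r : {z : A ⊕ₗ J // z ≤ xm} → A,
      (∀ (a : A) (h : toLex (Sum.inl a) ≤ xm), r ⟨toLex (Sum.inl a), h⟩ = a) →
      ∃! s : (A ⊕ₗ {y : J // y ≤ x}) → WithTop A,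
        ((∀ a : A, s (toLex (Sum.inl a)) = (a : WithTop A)) ∧
         (∃ e : WithTop A → (A ⊕ₗ {y : J // y ≤ x}), Monotone e ∧
           (∀ z, s (e z) = z) ∧ (∀ w, e (s w) ≤ w) ∧
           e ⊤ = toLex (Sum.inr ⟨x, le_refl x⟩))) ∧
        (∀ z, s (ι z) = (r z : WithTop A)) :=
  stmt16_general A J x xm hxm ι hι1 hι2
end

section
/- Let S be an ordered forest, I a finite linear order, and p : A ⊕ (Q × I) → A ⊕ Q a function with property (*), where Q = Q(S,I) = {(s,u) ∈ S × I^{<ht(S)} : ht(s) = |u|+1}. Call (s,t) ∈ S ⊗ I very good if for all s' ⊑_S s and initial segments t' of t of corresponding length, (s',t') is the ≤-smallest element z of I(s', t'↾(ht(s')−1)) with p(z) = (s', t'↾(ht(s')−1)). Then for each s ∈ S there is exactly one sequence t (denoted t_s) such that (s, t_s) is very good, and for s₁ ⊑_S s₂ one has t_{s₁} = t_{s₂}↾ht(s₁). -/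
variable {α : Type} [Finite α]

/-- The carrier of `Q = Q(S, I)`: pairs `(s, u)` with `|u| = ht(s) − 1`. -/
def QCar (S : OForest α) (I : Type) : Type := Σ s : α, Fin (htF S s - 1) → I

/-- Drop the last entry of a sequence of length `ht(s)`. -/
def dropLastF (S : OForest α) {I : Type} {s : α} (t : Fin (htF S s) → I) :
    Fin (htF S s - 1) → I :=
  fun k => t ⟨k.1, Nat.lt_of_lt_of_le k.2 (Nat.sub_le _ _)⟩

/-- The last index of a sequence of length `ht(s)` (heights are positive). -/
noncomputable def lastIx (S : OForest α) (s : α) : Fin (htF S s) :=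
  ⟨htF S s - 1, by
    have h : 0 < htF S s := by
      have : Nonempty {x // S.tle x s} := ⟨⟨s, S.tle_refl s⟩⟩
      exact Nat.card_pos
    omega⟩

/-- The identification `S ⊗ I ≅ Q × I`, `(s, t) ↦ ((s, t ↾ (ht(s)−1)), t(ht(s)−1))`. -/
noncomputable def toQ (S : OForest α) {I : Type} (p : TCar S I) : QCar S I × I :=
  (⟨p.1, dropLastF S p.2⟩, p.2 (lastIx S p.1))

/-- The restriction `t ↾ ht(s')` for `s' ⊑ s`. -/
def restrictT (S : OForest α) {I : Type}
    (hmono : ∀ a b, S.tle a b → htF S a ≤ htF S b) {s s' : α} (h : S.tle s' s)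
    (t : Fin (htF S s) → I) : Fin (htF S s') → I :=
  fun k => t ⟨k.1, Nat.lt_of_lt_of_le k.2 (hmono s' s h)⟩

/-- `(s, t) ∈ S ⊗ I` is very good for `pm`: for every `s' ⊑_S s`, with
`t' = t ↾ ht(s')`, the element `(s', t')` is the `≤`-smallest element `z` of
`I(s', t' ↾ (ht(s')−1))` with `pm z = (s', t' ↾ (ht(s')−1))`. -/
noncomputable def VeryGood (S : OForest α) {I A : Type} [LinearOrder I]
    (hmono : ∀ a b, S.tle a b → htF S a ≤ htF S b)
    (pm : A ⊕ (QCar S I × I) → A ⊕ QCar S I) (q : TCar S I) : Prop :=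
  ∀ (s' : α) (h : S.tle s' q.1),
    pm (Sum.inr (toQ S ⟨s', restrictT S hmono h q.2⟩)) =
      Sum.inr (toQ S ⟨s', restrictT S hmono h q.2⟩).1 ∧
    ∀ i : I, i < (toQ S ⟨s', restrictT S hmono h q.2⟩).2 →
      pm (Sum.inr ((toQ S ⟨s', restrictT S hmono h q.2⟩).1, i)) ≠
        Sum.inr (toQ S ⟨s', restrictT S hmono h q.2⟩).1

namespace OForest

variable (S : OForest α)

theorem htF_eq_ncard (s : α) : htF S s = {x | S.tle x s}.ncard := rfl

theorem htF_pos (s : α) : 0 < htF S s :=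
  (lastIx S s).pos

theorem htF_lt_of_tle_of_ne {a b : α} (h : S.tle a b) (hne : a ≠ b) : htF S a < htF S b := by
  rw [htF_eq_ncard, htF_eq_ncard]
  refine Set.ncard_lt_ncard ⟨fun x hx => S.tle_trans x a b hx h, fun hsub => hne ?_⟩
  exact S.tle_antisymm a b h (hsub (S.tle_refl b))

theorem htF_mono {a b : α} (h : S.tle a b) : htF S a ≤ htF S b :=
  Set.ncard_le_ncard fun x hx => S.tle_trans x a b hx h

theorem eq_of_tle_of_htF_le {a b : α} (h : S.tle a b) (hle : htF S b ≤ htF S a) : a = b := by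
  by_contra hne
  exact (S.htF_lt_of_tle_of_ne h hne).not_ge hle

theorem tle_of_htF_le {a b s : α} (ha : S.tle a s) (hb : S.tle b s)
    (hle : htF S a ≤ htF S b) : S.tle a b := by
  rcases S.pred_chain s a b ha hb with hab | hba
  · exact hab
  · rw [S.eq_of_tle_of_htF_le hba hle]
    exact S.tle_refl a

theorem exists_tle_htF_eq {s : α} {k : ℕ} (hk : k < htF S s) :
    ∃ x, S.tle x s ∧ htF S x = k + 1 := by
  let f : {x // S.tle x s} → Fin (htF S s) := fun x =>
    ⟨htF S x.1 - 1, by have := S.htF_pos x.1; have := S.htF_mono x.2; omega⟩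
  have hf : Function.Injective f := fun x y hxy => by
    simp only [f, Fin.mk.injEq] at hxy
    replace hxy : htF S x.1 = htF S y.1 := by
      have := S.htF_pos x.1; have := S.htF_pos y.1; omega
    exact Subtype.ext (S.eq_of_tle_of_htF_le (S.tle_of_htF_le x.2 y.2 hxy.le) hxy.ge)
  obtain ⟨x, hx⟩ := (hf.bijective_of_nat_card_le (Nat.card_fin _).le).2 ⟨k, hk⟩
  simp only [f, Fin.mk.injEq] at hx
  exact ⟨x.1, x.2, by have := S.htF_pos x.1; omega⟩

end OForest

section VeryGood

variable {S : OForest α} {I A : Type} {hmono : ∀ a b, S.tle a b → htF S a ≤ htF S b}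

theorem toQ_restrictT_fst_eq {s x : α} (h : S.tle x s) {t₁ t₂ : Fin (htF S s) → I}
    (heq : ∀ j : Fin (htF S s), j.1 + 1 < htF S x → t₁ j = t₂ j) :
    (toQ S ⟨x, restrictT S hmono h t₁⟩).1 = (toQ S ⟨x, restrictT S hmono h t₂⟩).1 :=
  congrArg (Sigma.mk x) <| funext fun j => by
    have hj : j.1 + 1 < htF S x := by have : j.1 < htF S x - 1 := j.2; omega
    exact heq ⟨j.1, by have := S.htF_mono h; omega⟩ hj

theorem toQ_restrictT_snd {s x : α} (h : S.tle x s) {t : Fin (htF S s) → I} {k : ℕ}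
    (hx : htF S x = k + 1) (hk : k < htF S s) :
    (toQ S ⟨x, restrictT S hmono h t⟩).2 = t ⟨k, hk⟩ :=
  congrArg t (Fin.ext (by simp [lastIx, hx]))

def fiberIndices (pm : A ⊕ (QCar S I × I) → A ⊕ QCar S I) (q : QCar S I) : Set I :=
  {i | pm (Sum.inr (q, i)) = Sum.inr q}

variable [LinearOrder I] {pm : A ⊕ (QCar S I × I) → A ⊕ QCar S I}

theorem veryGood_iff {s : α} {t : Fin (htF S s) → I} :
    VeryGood S hmono pm ⟨s, t⟩ ↔ ∀ x (h : S.tle x s),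
      IsLeast (fiberIndices pm (toQ S ⟨x, restrictT S hmono h t⟩).1)
        (toQ S ⟨x, restrictT S hmono h t⟩).2 := by
  refine forall₂_congr fun x h => and_congr_right fun _ => ?_
  exact forall_congr' fun i => ⟨fun hi hfi => not_lt.1 fun hlt => hi hlt hfi,
    fun hi hlt hfi => (hi hfi).not_gt hlt⟩

theorem VeryGood.unique {s : α} {t₁ t₂ : Fin (htF S s) → I}
    (h₁ : VeryGood S hmono pm ⟨s, t₁⟩) (h₂ : VeryGood S hmono pm ⟨s, t₂⟩) : t₁ = t₂ := by
  suffices ∀ k (hk : k < htF S s), t₁ ⟨k, hk⟩ = t₂ ⟨k, hk⟩ from funext fun k => this k k.2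
  intro k
  induction k using Nat.strong_induction_on with
  | _ k ih =>
    intro hk
    obtain ⟨x, hxs, hxk⟩ := S.exists_tle_htF_eq hk
    have hq := toQ_restrictT_fst_eq (hmono := hmono) (t₁ := t₁) (t₂ := t₂) hxs
      fun j hj => ih j (by omega) j.2
    have h₁x := veryGood_iff.1 h₁ x hxs
    have h₂x := veryGood_iff.1 h₂ x hxs
    rw [hq] at h₁x
    rw [← toQ_restrictT_snd (hmono := hmono) (t := t₁) hxs hxk hk,
      ← toQ_restrictT_snd (hmono := hmono) (t := t₂) hxs hxk hk]
    exact h₁x.unique h₂x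

theorem VeryGood.restrict {s₁ s₂ : α} (h : S.tle s₁ s₂) {t : Fin (htF S s₂) → I}
    (ht : VeryGood S hmono pm ⟨s₂, t⟩) : VeryGood S hmono pm ⟨s₁, restrictT S hmono h t⟩ :=
  fun x hx => ht x (S.tle_trans x s₁ s₂ hx h)

theorem exists_isLeast_fiberIndices [Finite I] {q : QCar S I}
    (hq : ∃ i, pm (Sum.inr (q, i)) = Sum.inr q) : ∃ i, IsLeast (fiberIndices pm q) i :=
  let ⟨i, hi⟩ := (fiberIndices pm q).toFinite.exists_minimal hq
  ⟨i, minimal_iff_isLeast.1 hi⟩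

theorem exists_veryGood [Finite I] (hex : ∀ q : QCar S I, ∃ i, pm (Sum.inr (q, i)) = Sum.inr q)
    (s : α) : ∃ t, VeryGood S hmono pm ⟨s, t⟩ := by
  induction s using (InvImage.wf (htF S) wellFounded_lt).induction with
  | _ s ih =>
  -- at a root there is nothing to check; otherwise extend the very good sequence of the parent
  obtain ⟨u, hu⟩ : ∃ u : Fin (htF S s - 1) → I, ∀ t : Fin (htF S s) → I, dropLastF S t = u →
      ∀ x (h : S.tle x s), x ≠ s → IsLeast (fiberIndices pm (toQ S ⟨x, restrictT S hmono h t⟩).1)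
        (toQ S ⟨x, restrictT S hmono h t⟩).2 := by
    rcases Nat.lt_or_ge (htF S s) 2 with hroot | hs
    · refine ⟨fun j => absurd j.2 (by omega), fun t _ x h hne => absurd ?_ hne⟩
      exact S.eq_of_tle_of_htF_le h (by have := S.htF_pos x; omega)
    · obtain ⟨s₀, hs₀, hs₀n⟩ := S.exists_tle_htF_eq (s := s) (k := htF S s - 2) (by omega)
      obtain ⟨t₀, ht₀⟩ := ih s₀ (show htF S s₀ < htF S s by omega)
      refine ⟨fun j => t₀ ⟨j, by omega⟩, fun t ht x h hne => ?_⟩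
      have hx₀ : S.tle x s₀ :=
        S.tle_of_htF_le h hs₀ (by have := S.htF_lt_of_tle_of_ne h hne; omega)
      have : restrictT S hmono h t = restrictT S hmono hx₀ t₀ := funext fun k =>
        congrFun ht ⟨k, by have := k.2; have := S.htF_mono hx₀; omega⟩
      rw [this]
      exact veryGood_iff.1 ht₀ x hx₀
  obtain ⟨i, hi⟩ := exists_isLeast_fiberIndices (hex ⟨s, u⟩)
  set t : Fin (htF S s) → I := fun k => if hk : k.1 < htF S s - 1 then u ⟨k, hk⟩ else i
  refine ⟨t, veryGood_iff.2 fun x h => ?_⟩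
  by_cases hxs : x = s
  · subst hxs
    have hq : toQ S ⟨x, restrictT S hmono h t⟩ = (⟨x, u⟩, i) :=
      Prod.ext (congrArg (Sigma.mk x) (funext fun j => dif_pos j.2)) (dif_neg (by simp [lastIx]))
    rw [hq]
    exact hi
  · exact hu t (funext fun j => dif_pos j.2) x h hxs

end VeryGood

theorem stmt18_general (I A : Type) [Finite I] [LinearOrder I]
    (S : OForest α) (hmono : ∀ a b, S.tle a b → htF S a ≤ htF S b)
    (pm : A ⊕ (QCar S I × I) → A ⊕ QCar S I)
    (hp2 : ∀ q : QCar S I,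
      (∃ i : I, pm (Sum.inr (q, i)) = Sum.inr q) ∧
      (∀ i : I, pm (Sum.inr (q, i)) = Sum.inr q ∨
        ∃ a : A, pm (Sum.inr (q, i)) = Sum.inl a)) :
    (∀ s : α, ∃! t : Fin (htF S s) → I, VeryGood S hmono pm ⟨s, t⟩) ∧
    (∀ (s₁ s₂ : α) (h : S.tle s₁ s₂) (t₁ : Fin (htF S s₁) → I)
      (t₂ : Fin (htF S s₂) → I), VeryGood S hmono pm ⟨s₁, t₁⟩ →
      VeryGood S hmono pm ⟨s₂, t₂⟩ →
      ∀ (k : Fin (htF S s₁)) (k' : Fin (htF S s₂)),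
        (k : ℕ) = (k' : ℕ) → t₁ k = t₂ k') := by
  refine ⟨fun s => ?_, fun s₁ s₂ h t₁ t₂ h₁ h₂ k k' hk => ?_⟩
  · obtain ⟨t, ht⟩ := exists_veryGood (fun q => (hp2 q).1) s
    exact ⟨t, ht, fun t' ht' => ht'.unique ht⟩
  · rw [h₁.unique (h₂.restrict h)]
    exact congrArg t₂ (Fin.ext hk)

/-- For `p` with property (⁎) (`p ↾ A = id_A` and `(s,u) ∈ p[I(s,u)] ⊆ A ∪ {(s,u)}`),
each `s ∈ S` has exactly one `t = t_s` with `(s, t)` very good, and for `s₁ ⊑_S s₂`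
one has `t_{s₁} = t_{s₂} ↾ ht(s₁)`. -/
theorem stmt18 (I A : Type) [Finite I] [LinearOrder I] [Nonempty I]
    (S : OForest α) (hmono : ∀ a b, S.tle a b → htF S a ≤ htF S b)
    (pm : A ⊕ (QCar S I × I) → A ⊕ QCar S I)
    (hp1 : ∀ a : A, pm (Sum.inl a) = Sum.inl a)
    (hp2 : ∀ q : QCar S I,
      (∃ i : I, pm (Sum.inr (q, i)) = Sum.inr q) ∧
      (∀ i : I, pm (Sum.inr (q, i)) = Sum.inr q ∨
        ∃ a : A, pm (Sum.inr (q, i)) = Sum.inl a)) :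
    (∀ s : α, ∃! t : Fin (htF S s) → I, VeryGood S hmono pm ⟨s, t⟩) ∧
    (∀ (s₁ s₂ : α) (h : S.tle s₁ s₂) (t₁ : Fin (htF S s₁) → I)
      (t₂ : Fin (htF S s₂) → I), VeryGood S hmono pm ⟨s₁, t₁⟩ →
      VeryGood S hmono pm ⟨s₂, t₂⟩ →
      ∀ (k : Fin (htF S s₁)) (k' : Fin (htF S s₂)),
        (k : ℕ) = (k' : ℕ) → t₁ k = t₂ k') :=
  stmt18_general I A S hmono pm hp2
end
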